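/- arXiv:1909.12651 — 9 statements merged into one kernel-verified Lean document; each statement's English description precedes it below -/
import Mathlib

section
/- For any bornology 𝓑 on a set X, the family of entourages E ⊆ X × X containing the diagonal such that for every B ∈ 𝓑 both E[B] and E⁻¹[B] belong to 𝓑 forms a coarse structure on X, and it is the largest coarse structure on X whose bounded sets are exactly the members of 𝓑. -/
open Set

def diagS (X : Type*) : Set (X × X) := {p | p.1 = p.2}

def compS {X : Type*} (E F : Set (X × X)) : Set (X × X) :=
  {p | ∃ z, (p.1, z) ∈ E ∧ (z, p.2) ∈ F}

def invS {X : Type*} (E : Set (X × X)) : Set (X × X) := {p | (p.2, p.1) ∈ E}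

def ballS {X : Type*} (E : Set (X × X)) (A : Set X) : Set X :=
  {y | ∃ x ∈ A, (x, y) ∈ E}

/-- A coarse structure on `X`. -/
structure IsCoarse {X : Type*} (E : Set (Set (X × X))) : Prop where
  diag_sub : ∀ e ∈ E, diagS X ⊆ e
  comp_mem : ∀ e ∈ E, ∀ f ∈ E, compS e f ∈ E
  inv_mem : ∀ e ∈ E, invS e ∈ E
  subset_mem : ∀ e ∈ E, ∀ f, diagS X ⊆ f → f ⊆ e → f ∈ E
  cover : ⋃₀ E = Set.univ

/-- `B` is bounded in the coarse structure `E`. -/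
def IsBoundedIn {X : Type*} (E : Set (Set (X × X))) (B : Set X) : Prop :=
  ∃ e ∈ E, ∃ x : X, B ⊆ ballS e {x}

/-- A bornology on `X` (as a family of sets). -/
structure IsBornology {X : Type*} (B : Set (Set X)) : Prop where
  cover : ⋃₀ B = Set.univ
  univ_not_mem : Set.univ ∉ B
  subset_mem : ∀ b ∈ B, ∀ a ⊆ b, a ∈ B
  union_mem : ∀ b ∈ B, ∀ c ∈ B, b ∪ c ∈ B

/-- The coarse structure `E` is compatible with the bornology `B`. -/
def Compatible {X : Type*} (E : Set (Set (X × X))) (B : Set (Set X)) : Prop :=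
  ∀ b : Set X, b ∈ B ↔ IsBoundedIn E b

/-- The largest coarse structure compatible with `B`. -/
def upB {X : Type*} (B : Set (Set X)) : Set (Set (X × X)) :=
  {e | diagS X ⊆ e ∧ ∀ b ∈ B, ballS e b ∈ B ∧ ballS (invS e) b ∈ B}

/-- The smallest coarse structure compatible with `B`. -/
def downB {X : Type*} (B : Set (Set X)) : Set (Set (X × X)) :=
  {e | diagS X ⊆ e ∧ ∃ b ∈ B, e ⊆ (b ×ˢ b) ∪ diagS X}

/-- `B^♯`: ultrafilters containing complements of all bounded sets. -/
def sharp {X : Type*} (B : Set (Set X)) : Set (Ultrafilter X) :=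
  {p | ∀ b ∈ B, (bᶜ : Set X) ∈ p}

/-- Two ultrafilters are `B`-isomorphic. -/
def BIso {X : Type*} (B : Set (Set X)) (p q : Ultrafilter X) : Prop :=
  ∃ f : X ≃ X, Ultrafilter.map f p = q ∧ (fun b : Set X => f '' b) '' B = B

/-- Two ultrafilters are isomorphic. -/
def UIso {X : Type*} (p q : Ultrafilter X) : Prop :=
  ∃ f : X ≃ X, Ultrafilter.map f p = q

/-- A free ultrafilter. -/
def FreeU {X : Type*} (p : Ultrafilter X) : Prop := ∀ x : X, p ≠ pure x

/-- The remainder `βω ∖ ω`: the set of free ultrafilters. -/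
def remainder : Set (Ultrafilter ℕ) := {p | FreeU p}

/-- `L` is large in the coarse structure `E`. -/
def IsLarge {X : Type*} (E : Set (Set (X × X))) (L : Set X) : Prop :=
  ∃ e ∈ E, ballS e L = Set.univ

/-- An unbounded coarse space is maximal if `X` is bounded in every
strictly larger coarse structure. -/
def IsMaximalCoarse {X : Type*} (E : Set (Set (X × X))) : Prop :=
  IsCoarse E ∧ ¬ IsBoundedIn E Set.univ ∧
    ∀ E' : Set (Set (X × X)), IsCoarse E' → E ⊂ E' → IsBoundedIn E' Set.univ

/-- The coarse structure on `ℕ` induced by finitely supported permutations. -/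
def finPermCoarse : Set (Set (ℕ × ℕ)) :=
  {e | diagS ℕ ⊆ e ∧ ∃ F : Finset (Equiv.Perm ℕ),
    (∀ g ∈ F, {x | g x ≠ x}.Finite) ∧
    e ⊆ {p | p.2 = p.1 ∨ ∃ g ∈ F, p.2 = g p.1}}


lemma singleton_mem_born {X : Type*} {B : Set (Set X)} (hB : IsBornology B) (x : X) :
    {x} ∈ B := by
  have : x ∈ ⋃₀ B := by rw [hB.cover]; trivial
  obtain ⟨b, hb, hx⟩ := this
  exact hB.subset_mem b hb {x} (by simpa using hx)

theorem stmt0 {X : Type*} (B : Set (Set X)) (hB : IsBornology B) :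
    IsCoarse (upB B) ∧ Compatible (upB B) B ∧
      ∀ E : Set (Set (X × X)), IsCoarse E → Compatible E B → E ⊆ upB B := by
  have hball_mono : ∀ (e f : Set (X × X)) (b : Set X), e ⊆ f → ballS e b ⊆ ballS f b := by
    rintro e f b hef y ⟨x, hx, hxy⟩
    exact ⟨x, hx, hef hxy⟩
  have hsq : ∀ c ∈ B, (diagS X ∪ c ×ˢ c) ∈ upB B := by
    intro c hc
    refine ⟨Set.subset_union_left, ?_⟩
    intro b hb
    have key : ∀ e ∈ ({diagS X ∪ c ×ˢ c} : Set (Set (X × X))), ballS (diagS X ∪ c ×ˢ c) b ∈ B := by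
      intro _ _
      exact hB.subset_mem (b ∪ c) (hB.union_mem b hb c hc) _
        (by rintro y ⟨x, hx, (h | ⟨h1, h2⟩)⟩
            · exact Or.inl ((show x = y from h) ▸ hx)
            · exact Or.inr h2)
    have h1 := key _ rfl
    have h2 : ballS (invS (diagS X ∪ c ×ˢ c)) b ∈ B := by
      have heq : invS (diagS X ∪ c ×ˢ c) = diagS X ∪ c ×ˢ c := by
        ext ⟨x, y⟩
        simp only [invS, diagS, Set.mem_union, Set.mem_setOf_eq, Set.mem_prod]
        tauto
      rw [heq]; exact h1
    exact ⟨h1, h2⟩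
  refine ⟨?_, ?_, ?_⟩
  · constructor
    · exact fun e he => he.1
    · rintro e ⟨hed, heb⟩ f ⟨hfd, hfb⟩
      refine ⟨?_, ?_⟩
      · rintro ⟨x, y⟩ (h : x = y)
        exact ⟨x, hed rfl, h ▸ hfd rfl⟩
      · intro b hb
        constructor
        · have heq : ballS (compS e f) b = ballS f (ballS e b) := by
            ext y
            simp only [ballS, compS, Set.mem_setOf_eq]
            constructor
            · rintro ⟨x, hx, z, h1, h2⟩; exact ⟨z, ⟨x, hx, h1⟩, h2⟩
            · rintro ⟨z, ⟨x, hx, h1⟩, h2⟩; exact ⟨x, hx, z, h1, h2⟩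
          rw [heq]
          exact (hfb _ (heb b hb).1).1
        · have heq : ballS (invS (compS e f)) b = ballS (invS e) (ballS (invS f) b) := by
            ext y
            simp only [ballS, invS, compS, Set.mem_setOf_eq]
            constructor
            · rintro ⟨x, hx, z, h1, h2⟩; exact ⟨z, ⟨x, hx, h2⟩, h1⟩
            · rintro ⟨z, ⟨x, hx, h2⟩, h1⟩; exact ⟨x, hx, z, h1, h2⟩
          rw [heq]
          exact (heb _ (hfb b hb).2).2
    · rintro e ⟨hed, heb⟩
      refine ⟨?_, ?_⟩
      · rintro ⟨x, y⟩ (h : x = y)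
        exact hed (h.symm : (⟨y, x⟩ : X × X).1 = _)
      · intro b hb
        have hinv : invS (invS e) = e := rfl
        exact ⟨(heb b hb).2, hinv ▸ (heb b hb).1⟩
    · rintro e ⟨hed, heb⟩ f hfd hfe
      refine ⟨hfd, fun b hb => ?_⟩
      refine ⟨hB.subset_mem _ (heb b hb).1 _ (hball_mono _ _ _ hfe), ?_⟩
      exact hB.subset_mem _ (heb b hb).2 _ (hball_mono _ _ _ (fun p hp => hfe hp))
    · ext ⟨x, y⟩
      simp only [Set.mem_sUnion, Set.mem_univ, iff_true]
      have hc : ({x, y} : Set X) ∈ B :=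
        hB.union_mem {x} (singleton_mem_born hB x) {y} (singleton_mem_born hB y)
      exact ⟨_, hsq _ hc, Or.inr ⟨by simp, by simp⟩⟩
  · intro b
    constructor
    · intro hb
      rcases Set.eq_empty_or_nonempty b with rfl | ⟨x, hx⟩
      · by_cases hX : Nonempty X
        · obtain ⟨x⟩ := hX
          exact ⟨_, hsq {x} (singleton_mem_born hB x), x, by simp [ballS]⟩
        · exfalso
          have : (Set.univ : Set X) = ∅ := by
            ext x; exact absurd ⟨x⟩ hX
          exact hB.univ_not_mem (this ▸ hb)
      · refine ⟨_, hsq b hb, x, ?_⟩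
        intro y hy
        exact ⟨x, rfl, Or.inr ⟨hx, hy⟩⟩
    · rintro ⟨e, ⟨hed, heb⟩, x, hbx⟩
      exact hB.subset_mem _ (heb {x} (singleton_mem_born hB x)).1 b hbx
  · intro E hE hcomp e he
    refine ⟨hE.diag_sub e he, fun b hb => ?_⟩
    obtain ⟨f, hf, x, hbf⟩ := (hcomp b).1 hb
    constructor
    · apply (hcomp _).2
      refine ⟨compS f e, hE.comp_mem f hf e he, x, ?_⟩
      rintro y ⟨w, hw, hwy⟩
      obtain ⟨x', hx', hxw⟩ := hbf hw
      exact ⟨x', hx', w, hxw, hwy⟩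
    · apply (hcomp _).2
      refine ⟨compS f (invS e), hE.comp_mem f hf (invS e) (hE.inv_mem e he), x, ?_⟩
      rintro y ⟨w, hw, hwy⟩
      obtain ⟨x', hx', hxw⟩ := hbf hw
      exact ⟨x', hx', w, hxw, hwy⟩
end

section
/- If a bornology 𝓑 on X admits two distinct 𝓑-isomorphic ultrafilters p, q ∈ 𝓑^♯, then the largest coarse structure ↑𝓑 compatible with 𝓑 strictly contains the smallest coarse structure ↓𝓑, i.e., 𝓑 is not minmax. -/
open Set

theorem stmt3 {X : Type*} (B : Set (Set X)) (hB : IsBornology B)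
    (p q : Ultrafilter X) (hp : p ∈ sharp B) (hq : q ∈ sharp B)
    (hne : p ≠ q) (hiso : BIso B p q) :
    downB B ⊂ upB B := by
  obtain ⟨f, hmap, himg⟩ := hiso
  -- image lemmas
  have hfwd : ∀ A ∈ B, f '' A ∈ B := by
    intro A hA
    rw [← himg]; exact Set.mem_image_of_mem _ hA
  have hbwd : ∀ A ∈ B, f.symm '' A ∈ B := by
    intro A hA
    rw [← himg] at hA
    obtain ⟨A', hA', rfl⟩ := hA
    have : f.symm '' (f '' A') = A' := by
      ext x; simp
    rw [this]; exact hA'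
  -- downB ⊆ upB
  have hsub : downB B ⊆ upB B := by
    rintro e ⟨hd, b, hb, hsb⟩
    refine ⟨hd, fun A hA => ?_⟩
    have key : ∀ e' : Set (X × X), e' ⊆ (b ×ˢ b) ∪ diagS X → ballS e' A ∈ B := by
      intro e' he'
      have hsub2 : ballS e' A ⊆ A ∪ b := by
        rintro y ⟨x, hx, hxy⟩
        rcases he' hxy with h | h
        · exact Or.inr h.2
        · exact Or.inl ((show x = y from h) ▸ hx)
      exact hB.subset_mem _ (hB.union_mem A hA b hb) _ hsub2
    refine ⟨key e hsb, key _ ?_⟩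
    rintro ⟨x, y⟩ hxy
    rcases hsb hxy with h | h
    · exact Or.inl ⟨h.2, h.1⟩
    · exact Or.inr h.symm
  refine ⟨hsub, fun hge => ?_⟩
  -- the witness entourage
  set e : Set (X × X) := {p | p.2 = p.1 ∨ p.2 = f p.1 ∨ p.1 = f p.2} with he
  have hdiag : diagS X ⊆ e := by
    rintro ⟨x, y⟩ (h : x = y); exact Or.inl h.symm
  have heup : e ∈ upB B := by
    refine ⟨hdiag, fun A hA => ?_⟩
    have key : ballS e A ∈ B ∧ ballS (invS e) A ∈ B := by
      have h1 : ballS e A ⊆ A ∪ (f '' A ∪ f.symm '' A) := by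
        rintro y ⟨x, hx, hxy⟩
        rcases hxy with h | h | h
        · exact Or.inl ((show y = x from h) ▸ hx)
        · exact Or.inr (Or.inl ⟨x, hx, h.symm⟩)
        · exact Or.inr (Or.inr ⟨x, hx, by rw [show x = f y from h]; simp⟩)
      have h2 : ballS (invS e) A ⊆ A ∪ (f '' A ∪ f.symm '' A) := by
        rintro y ⟨x, hx, hxy⟩
        rcases hxy with h | h | h
        · exact Or.inl ((show x = y from h) ▸ hx)
        · exact Or.inr (Or.inr ⟨x, hx, by rw [show x = f y from h]; simp⟩)
        · exact Or.inr (Or.inl ⟨x, hx, (show y = f x from h).symm⟩)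
      have hmem : A ∪ (f '' A ∪ f.symm '' A) ∈ B :=
        hB.union_mem A hA _ (hB.union_mem _ (hfwd A hA) _ (hbwd A hA))
      exact ⟨hB.subset_mem _ hmem _ h1, hB.subset_mem _ hmem _ h2⟩
    exact key
  have hedown : e ∈ downB B := hge heup
  obtain ⟨_, b, hb, hsb⟩ := hedown
  -- f is identity outside b
  have hfix : bᶜ ⊆ {x | f x = x} := by
    intro x hx
    by_contra hfx
    have hxe : ((x, f x) : X × X) ∈ e := Or.inr (Or.inl rfl)
    rcases hsb hxe with h | h
    · exact hx h.1
    · exact hfx (h : x = f x).symm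
  have hfixp : {x | f x = x} ∈ p := p.toFilter.sets_of_superset (hp b hb) hfix
  have : Ultrafilter.map f p = p := by
    apply Ultrafilter.coe_injective
    rw [Ultrafilter.coe_map]
    exact Filter.map_congr (hfixp : f =ᶠ[↑p] id) |>.trans (Filter.map_id)
  exact hne (this.symm.trans hmap)
end

section
/- Any discrete countable subset D of βω∖ω consisting of weak P-points can be separated: there exists a family {P_n}_{n∈ω} of pairwise disjoint subsets of ω and an enumeration D = {p_n}_{n∈ω} such that P_n ∈ p_n for every n. -/
open Set

theorem stmt7 (D : Set (Ultrafilter ℕ)) (hsub : D ⊆ remainder)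
    (hc : D.Countable) (hi : D.Infinite)
    (hdisc : ∀ p ∈ D, ∃ U : Set (Ultrafilter ℕ), IsOpen U ∧ U ∩ D = {p})
    (hwp : ∀ p ∈ D, ∀ C ⊆ remainder, C.Countable → p ∉ C → p ∉ closure C) :
    ∃ (p : ℕ → Ultrafilter ℕ) (P : ℕ → Set ℕ),
      D = Set.range p ∧ (∀ m n, m ≠ n → Disjoint (P m) (P n)) ∧
      ∀ n, P n ∈ p n := by
  haveI : Countable D := hc.to_subtype
  haveI : Infinite D := hi.to_subtype
  obtain ⟨e⟩ : Nonempty (ℕ ≃ D) := nonempty_equiv_of_countable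
  set p : ℕ → Ultrafilter ℕ := fun n => (e n : Ultrafilter ℕ) with hp
  have hpD : ∀ n, p n ∈ D := fun n => (e n).2
  have hpinj : Function.Injective p := fun m n h => by
    have := Subtype.coe_injective h
    exact e.injective this
  have hrange : D = Set.range p := by
    ext u; constructor
    · intro hu; exact ⟨e.symm ⟨u, hu⟩, by simp [hp]⟩
    · rintro ⟨n, rfl⟩; exact hpD n
  -- choose separating sets
  have key : ∀ n, ∃ A : Set ℕ, A ∈ p n ∧ ∀ u ∈ D, u ≠ p n → A ∉ u := by
    intro n
    have hC : p n ∉ closure (D \ {p n}) := by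
      refine hwp (p n) (hpD n) _ (fun u hu => hsub hu.1) (hc.mono diff_subset) ?_
      simp
    have hopen : IsOpen (closure (D \ {p n}))ᶜ := isClosed_closure.isOpen_compl
    obtain ⟨t, ⟨A, rfl⟩, hmem, hsubt⟩ :=
      ultrafilterBasis_is_basis.exists_subset_of_mem_open hC hopen
    refine ⟨A, hmem, fun u hu hne hAu => ?_⟩
    have : u ∈ closure (D \ {p n}) := subset_closure ⟨hu, hne⟩
    exact hsubt hAu this
  choose A hA hA' using key
  refine ⟨p, fun n => A n \ ⋃ m ∈ Finset.range n, A m, hrange, ?_, ?_⟩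
  · intro m n hmn
    rcases hmn.lt_or_gt with h | h
    · refine Set.disjoint_left.2 fun x hx hx' => ?_
      exact hx'.2 (Set.mem_biUnion (Finset.mem_range.2 h) hx.1)
    · refine Set.disjoint_left.2 fun x hx hx' => ?_
      exact hx.2 (Set.mem_biUnion (Finset.mem_range.2 h) hx'.1)
  · intro n
    refine Filter.diff_mem (hA n) ?_
    have : (⋃ m ∈ Finset.range n, A m)ᶜ = ⋂ m ∈ Finset.range n, (A m)ᶜ := by
      simp [Set.compl_iUnion]
    rw [this]
    refine (Filter.biInter_mem (Finset.finite_toSet _)).2 fun m hm => ?_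
    refine Ultrafilter.compl_mem_iff_notMem.2 ?_
    refine hA' m (p n) (hpD n) fun h => ?_
    have := hpinj h
    exact absurd this (by simp at hm; omega)
end

section
/- (Frolík) If A and B are countable subsets of βω∖ω such that A is disjoint from the closure of B and B is disjoint from the closure of A, then the closures of A and B in βω are disjoint. -/
open Set

lemma key_closure {α : Type*} (U : Set (Ultrafilter α)) (hU : IsOpen U) :
    closure U ⊆ {u : Ultrafilter α | {x | (pure x : Ultrafilter α) ∈ U} ∈ u} := by
  apply closure_minimal _ (ultrafilter_isClosed_basic _)
  intro u hu
  obtain ⟨t, ⟨s, rfl⟩, hut, hsub⟩ := ultrafilterBasis_is_basis.exists_subset_of_mem_open hu hU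
  exact Filter.mem_of_superset hut (fun x hx => hsub hx)

lemma disjoint_closures_of_disjoint_open {α : Type*} (U V : Set (Ultrafilter α))
    (hU : IsOpen U) (hV : IsOpen V) (hUV : U ∩ V = ∅) : closure U ∩ closure V = ∅ := by
  ext u
  simp only [mem_inter_iff, mem_empty_iff_false, iff_false, not_and]
  intro h1 h2
  have k1 := key_closure U hU h1
  have k2 := key_closure V hV h2
  have : ({x | (pure x : Ultrafilter α) ∈ U} ∩ {x | (pure x : Ultrafilter α) ∈ V} : Set α) ∈ u :=
    Filter.inter_mem k1 k2
  have he : ({x | (pure x : Ultrafilter α) ∈ U} ∩ {x | (pure x : Ultrafilter α) ∈ V} : Set α) = ∅ := by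
    ext x; simp only [mem_inter_iff, mem_setOf_eq, mem_empty_iff_false, iff_false, not_and]
    intro hx1 hx2
    exact absurd (Set.mem_inter hx1 hx2) (by rw [hUV]; exact notMem_empty _)
  rw [he] at this
  exact Ultrafilter.empty_notMem this

lemma sep_open {α : Type*} (A B : Set (Ultrafilter α)) (hAc : A.Countable) (hBc : B.Countable)
    (h1 : A ∩ closure B = ∅) (h2 : B ∩ closure A = ∅) :
    ∃ U V : Set (Ultrafilter α), IsOpen U ∧ IsOpen V ∧ A ⊆ U ∧ B ⊆ V ∧ U ∩ V = ∅ := by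
  rcases A.eq_empty_or_nonempty with rfl | hAne
  · exact ⟨∅, univ, isOpen_empty, isOpen_univ, Subset.rfl, subset_univ _, by simp⟩
  rcases B.eq_empty_or_nonempty with rfl | hBne
  · exact ⟨univ, ∅, isOpen_univ, isOpen_empty, subset_univ _, Subset.rfl, by simp⟩
  obtain ⟨f, rfl⟩ := hAc.exists_eq_range hAne
  obtain ⟨g, rfl⟩ := hBc.exists_eq_range hBne
  -- for each n, a clopen nbhd of f n disjoint from closure (range g)
  have hf : ∀ n, f n ∈ (closure (range g))ᶜ := by
    intro n
    intro hmem
    exact absurd (Set.mem_inter (mem_range_self n) hmem) (by rw [h1]; exact notMem_empty _)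
  have hg : ∀ n, g n ∈ (closure (range f))ᶜ := by
    intro n
    intro hmem
    exact absurd (Set.mem_inter (mem_range_self n) hmem) (by rw [h2]; exact notMem_empty _)
  have hCex : ∀ n, ∃ s : Set α, f n ∈ {u : Ultrafilter α | s ∈ u} ∧
      {u : Ultrafilter α | s ∈ u} ⊆ (closure (range g))ᶜ := by
    intro n
    obtain ⟨t, ⟨s, rfl⟩, hut, hsub⟩ := ultrafilterBasis_is_basis.exists_subset_of_mem_open
      (hf n) (isClosed_closure).isOpen_compl
    exact ⟨s, hut, hsub⟩
  have hDex : ∀ n, ∃ s : Set α, g n ∈ {u : Ultrafilter α | s ∈ u} ∧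
      {u : Ultrafilter α | s ∈ u} ⊆ (closure (range f))ᶜ := by
    intro n
    obtain ⟨t, ⟨s, rfl⟩, hut, hsub⟩ := ultrafilterBasis_is_basis.exists_subset_of_mem_open
      (hg n) (isClosed_closure).isOpen_compl
    exact ⟨s, hut, hsub⟩
  choose c hc1 hc2 using hCex
  choose d hd1 hd2 using hDex
  set C : ℕ → Set (Ultrafilter α) := fun n => {u | c n ∈ u} with hC
  set D : ℕ → Set (Ultrafilter α) := fun n => {u | d n ∈ u} with hD
  have hCopen : ∀ n, IsOpen (C n) := fun n => ultrafilter_isOpen_basic _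
  have hDopen : ∀ n, IsOpen (D n) := fun n => ultrafilter_isOpen_basic _
  have hCclosed : ∀ n, IsClosed (C n) := fun n => ultrafilter_isClosed_basic _
  have hDclosed : ∀ n, IsClosed (D n) := fun n => ultrafilter_isClosed_basic _
  have hCA : ∀ n m, f m ∉ D n := fun n m hmem =>
    (hd2 n hmem) (subset_closure (mem_range_self m))
  have hDB : ∀ n m, g m ∉ C n := fun n m hmem =>
    (hc2 n hmem) (subset_closure (mem_range_self m))
  refine ⟨⋃ n, C n \ ⋃ k ≤ n, D k, ⋃ n, D n \ ⋃ k ≤ n, C k, ?_, ?_, ?_, ?_, ?_⟩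
  · exact isOpen_iUnion fun n => (hCopen n).sdiff
      ((Set.finite_le_nat n).isClosed_biUnion fun k _ => hDclosed k)
  · exact isOpen_iUnion fun n => (hDopen n).sdiff
      ((Set.finite_le_nat n).isClosed_biUnion fun k _ => hCclosed k)
  · rintro _ ⟨n, rfl⟩
    exact mem_iUnion.mpr ⟨n, hc1 n, by
      simp only [mem_iUnion, not_exists]
      intro k _ hk
      exact hCA k n hk⟩
  · rintro _ ⟨n, rfl⟩
    exact mem_iUnion.mpr ⟨n, hd1 n, by
      simp only [mem_iUnion, not_exists]
      intro k _ hk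
      exact hDB k n hk⟩
  · ext u
    simp only [mem_inter_iff, mem_iUnion, mem_diff, mem_empty_iff_false, iff_false, not_and]
    rintro ⟨n, hCn, hnD⟩ ⟨m, hDm, hmC⟩
    simp only [mem_iUnion, not_exists] at hnD hmC
    rcases le_total m n with h | h
    · exact hnD m h hDm
    · exact hmC n h hCn

theorem stmt9 (A B : Set (Ultrafilter ℕ)) (hA : A ⊆ remainder)
    (hB : B ⊆ remainder) (hAc : A.Countable) (hBc : B.Countable)
    (h1 : A ∩ closure B = ∅) (h2 : B ∩ closure A = ∅) :
    closure A ∩ closure B = ∅ := by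
  obtain ⟨U, V, hU, hV, hAU, hBV, hUV⟩ := sep_open A B hAc hBc h1 h2
  have := disjoint_closures_of_disjoint_open U V hU hV hUV
  exact eq_empty_of_subset_empty (this ▸ inter_subset_inter
    (closure_mono hAU) (closure_mono hBV))
end

section
/- There exists a minmax bornology on ω that is not ultradiscrete; namely, if p and q are two non-isomorphic free ultrafilters on ω, then 𝓑 = {B ⊆ ω : ω∖B ∈ p ∩ q} is a bornology with 𝓑^♯ = {p, q}, which is minmax but not ultradiscrete. -/
open Set

/-- Finite 3-coloring of a functional graph. -/
lemma finColoring (f : ℕ → ℕ) (S : Finset ℕ) :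
    ∃ c : ℕ → Fin 3, ∀ x ∈ S, f x ∈ S → f x ≠ x → c (f x) ≠ c x := by
  classical
  induction S using Finset.strongInduction with
  | _ S ih =>
    rcases S.eq_empty_or_nonempty with rfl | hne
    · exact ⟨fun _ => 0, by simp⟩
    · -- find a vertex with at most one nontrivial in-neighbor
      set T : ℕ → Finset ℕ := fun x => S.filter (fun y => f y = x ∧ y ≠ x) with hT
      have hdisj : ∀ x ∈ S, ∀ y ∈ S, x ≠ y → Disjoint (T x) (T y) := by
        intro x _ y _ hxy
        refine Finset.disjoint_left.mpr ?_
        intro a ha ha'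
        simp only [hT, Finset.mem_filter] at ha ha'
        exact hxy (ha.2.1 ▸ ha'.2.1.symm ▸ rfl)
      have hsum : ∑ x ∈ S, (T x).card ≤ S.card := by
        rw [← Finset.card_biUnion hdisj]
        exact Finset.card_le_card (Finset.biUnion_subset.mpr fun x _ => Finset.filter_subset _ _)
      have hx0 : ∃ x₀ ∈ S, (T x₀).card ≤ 1 := by
        by_contra hcon
        push_neg at hcon
        have h2 : 2 * S.card ≤ ∑ x ∈ S, (T x).card := by
          calc 2 * S.card = ∑ _x ∈ S, 2 := by rw [Finset.sum_const, smul_eq_mul, mul_comm]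
          _ ≤ ∑ x ∈ S, (T x).card := Finset.sum_le_sum fun x hx => hcon x hx
        have := le_trans h2 hsum
        have hpos : 0 < S.card := Finset.card_pos.mpr hne
        omega
      obtain ⟨x₀, hx₀S, hx₀⟩ := hx0
      obtain ⟨c', hc'⟩ := ih (S.erase x₀) (Finset.erase_ssubset hx₀S)
      set forb : Finset (Fin 3) := insert (c' (f x₀)) ((T x₀).image c') with hforb
      have hcard : forb.card ≤ 2 := by
        calc forb.card ≤ ((T x₀).image c').card + 1 := Finset.card_insert_le _ _
        _ ≤ (T x₀).card + 1 := by have := Finset.card_image_le (s := T x₀) (f := c'); omega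
        _ ≤ 2 := by omega
      have hex : ∃ i : Fin 3, i ∉ forb := by
        by_contra hcon
        push_neg at hcon
        have : (Finset.univ : Finset (Fin 3)) ⊆ forb := fun i _ => hcon i
        have := Finset.card_le_card this
        simp at this
        omega
      obtain ⟨i, hi⟩ := hex
      refine ⟨Function.update c' x₀ i, ?_⟩
      intro x hxS hfxS hfx
      by_cases hx : x = x₀
      · subst hx
        have hfx' : f x ∈ S.erase x := Finset.mem_erase.mpr ⟨hfx, hfxS⟩
        rw [Function.update_of_ne hfx, Function.update_self]
        intro h
        exact hi (by rw [← h]; exact Finset.mem_insert_self _ _)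
      · by_cases hfx0 : f x = x₀
        · have hxT : x ∈ T x₀ := by
            simp only [hT, Finset.mem_filter]
            exact ⟨hxS, hfx0, hx⟩
          rw [hfx0, Function.update_self, Function.update_of_ne hx]
          intro h
          exact hi (by rw [h]; exact Finset.mem_insert_of_mem (Finset.mem_image_of_mem _ hxT))
        · rw [Function.update_of_ne hfx0, Function.update_of_ne hx]
          exact hc' x (Finset.mem_erase.mpr ⟨hx, hxS⟩) (Finset.mem_erase.mpr ⟨hfx0, hfxS⟩) hfx

/-- 3-coloring of the functional graph of `f` on `ℕ`. -/
lemma coloring (f : ℕ → ℕ) : ∃ c : ℕ → Fin 3, ∀ x, f x ≠ x → c (f x) ≠ c x := by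
  classical
  have H := fun n : ℕ => finColoring f (Finset.range n)
  choose cs hcs using H
  set U := Filter.hyperfilter ℕ with hU
  have hc : ∀ x : ℕ, ∃ i : Fin 3, {n | cs n x = i} ∈ U := by
    intro x
    obtain ⟨i, hi⟩ := Ultrafilter.eq_pure_of_finite (Ultrafilter.map (fun n => cs n x) U)
    refine ⟨i, ?_⟩
    have : {i} ∈ Ultrafilter.map (fun n => cs n x) U := by
      rw [hi]; exact Ultrafilter.mem_pure.mpr rfl
    rw [Ultrafilter.mem_map] at this
    exact this
  choose c hcmem using hc
  refine ⟨c, fun x hx => ?_⟩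
  have h3 : {n | max x (f x) < n} ∈ U := by
    apply Filter.hyperfilter_le_cofinite
    rw [Nat.cofinite_eq_atTop]
    exact Filter.eventually_gt_atTop _
  have hmem : {n | cs n x = c x} ∩ ({n | cs n (f x) = c (f x)} ∩ {n | max x (f x) < n}) ∈ U :=
    Filter.inter_mem (hcmem x) (Filter.inter_mem (hcmem (f x)) h3)
  obtain ⟨n, hn1, hn2, hn3⟩ := Ultrafilter.nonempty_of_mem hmem
  have hxr : x ∈ Finset.range n := Finset.mem_range.mpr (lt_of_le_of_lt (le_max_left _ _) hn3)
  have hfxr : f x ∈ Finset.range n := Finset.mem_range.mpr (lt_of_le_of_lt (le_max_right _ _) hn3)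
  have := hcs n x hxr hfxr hx
  rw [hn1, hn2] at this
  exact this

/-- If an ultrafilter is fixed by `map f`, then `f` is the identity on a member. -/
lemma fix_mem (f : ℕ → ℕ) (u : Ultrafilter ℕ) (h : Ultrafilter.map f u = u) :
    {x | f x = x} ∈ u := by
  by_contra hne
  have hmoved : {x | f x = x}ᶜ ∈ u := Ultrafilter.compl_mem_iff_notMem.mpr hne
  obtain ⟨c, hc⟩ := coloring f
  obtain ⟨i, hi⟩ : ∃ i : Fin 3, {x | c x = i} ∈ u := by
    obtain ⟨i, hi⟩ := Ultrafilter.eq_pure_of_finite (Ultrafilter.map c u)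
    refine ⟨i, ?_⟩
    have : {i} ∈ Ultrafilter.map c u := by rw [hi]; exact Ultrafilter.mem_pure.mpr rfl
    rw [Ultrafilter.mem_map] at this
    exact this
  have h2 : {x | c (f x) = i} ∈ u := by
    have : {x | c x = i} ∈ Ultrafilter.map f u := h.symm ▸ hi
    rw [Ultrafilter.mem_map] at this
    exact this
  obtain ⟨x, hx1, hx2, hx3⟩ :=
    Ultrafilter.nonempty_of_mem (Filter.inter_mem hmoved (Filter.inter_mem hi h2))
  exact hc x hx1 (by rw [hx2, hx3])

lemma ult_eq_of_subset {X : Type*} {u v : Ultrafilter X} (h : ∀ s ∈ u, s ∈ v) : u = v :=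
  (Ultrafilter.coe_le_coe.mp h).symm

lemma infinite_of_mem_free {u : Ultrafilter ℕ} (hu : FreeU u) {s : Set ℕ} (hs : s ∈ u) :
    s.Infinite := by
  by_contra h
  rw [Set.not_infinite] at h
  have hfin := h
  obtain ⟨x, _, hx⟩ := Ultrafilter.eq_pure_of_finite_mem hfin hs
  exact hu x hx

lemma exists_mem_compl_mem {X : Type*} {p q : Ultrafilter X} (h : p ≠ q) :
    ∃ S, S ∈ p ∧ Sᶜ ∈ q := by
  by_contra hcon
  push_neg at hcon
  refine h (ult_eq_of_subset fun s hs => ?_)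
  by_contra hsq
  exact hcon s hs (Ultrafilter.compl_mem_iff_notMem.mpr hsq)

lemma exists_perm (A : Set ℕ) (f : ℕ → ℕ) (hinj : Set.InjOn f A)
    (hA : (Aᶜ : Set ℕ).Infinite) (hfA : ((f '' A)ᶜ : Set ℕ).Infinite) :
    ∃ σ : Equiv.Perm ℕ, ∀ x ∈ A, σ x = f x := by
  classical
  haveI i1 : Infinite ↥(Aᶜ) := hA.to_subtype
  haveI i2 : Infinite ↥((f '' A)ᶜ) := hfA.to_subtype
  obtain ⟨e2⟩ : Nonempty (↥(Aᶜ) ≃ ↥((f '' A)ᶜ)) := nonempty_equiv_of_countable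
  let e1 := Equiv.Set.imageOfInjOn f A hinj
  refine ⟨(Equiv.Set.sumCompl A).symm.trans ((e1.sumCongr e2).trans
    (Equiv.Set.sumCompl (f '' A))), ?_⟩
  intro x hx
  simp only [Equiv.trans_apply, Equiv.Set.sumCompl_symm_apply_of_mem hx, Equiv.sumCongr_apply,
    Sum.map_inl, Equiv.Set.sumCompl_apply_inl, e1, Equiv.Set.imageOfInjOn, Equiv.coe_fn_mk]

lemma rk {u v : Ultrafilter ℕ} (hu : FreeU u) (hv : FreeU v) (hne : u ≠ v)
    (f g : ℕ → ℕ) (hf : Ultrafilter.map f u = v) (hg : Ultrafilter.map g v = u) : UIso u v := by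
  have hgf : Ultrafilter.map (g ∘ f) u = u := by
    rw [← Ultrafilter.map_map, hf, hg]
  have hfix : {x | g (f x) = x} ∈ u := fix_mem (g ∘ f) u hgf
  obtain ⟨S, hS, hSc⟩ := exists_mem_compl_mem hne
  have hpre : f ⁻¹' Sᶜ ∈ u := by rw [← Ultrafilter.mem_map, hf]; exact hSc
  set A : Set ℕ := {x | g (f x) = x} ∩ S ∩ f ⁻¹' Sᶜ with hA
  have hAu : A ∈ u := Filter.inter_mem (Filter.inter_mem hfix hS) hpre
  have hinj : Set.InjOn f A := by
    intro a ha b hb hab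
    have : g (f a) = a := ha.1.1
    have hb' : g (f b) = b := hb.1.1
    rw [← this, ← hb', hab]
  have hAc : (Aᶜ : Set ℕ).Infinite := by
    refine (infinite_of_mem_free hv hSc).mono ?_
    intro x hx hxA
    exact hx hxA.1.2
  have hfAc : ((f '' A)ᶜ : Set ℕ).Infinite := by
    refine (infinite_of_mem_free hu hS).mono ?_
    rintro x hx ⟨a, ha, rfl⟩
    exact ha.2 hx
  obtain ⟨σ, hσ⟩ := exists_perm A f hinj hAc hfAc
  refine ⟨σ, ?_⟩
  refine (ult_eq_of_subset fun s hs => ?_).symm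
  · rw [Ultrafilter.mem_map]
    have hfs : f ⁻¹' s ∈ u := by rw [← Ultrafilter.mem_map, hf]; exact hs
    apply Filter.mem_of_superset (Filter.inter_mem hfs hAu)
    intro x ⟨hx1, hx2⟩
    simp only [Set.mem_preimage]
    rw [hσ x hx2]
    exact hx1

lemma uiso_symm {p q : Ultrafilter ℕ} (h : UIso p q) : UIso q p := by
  obtain ⟨σ, hσ⟩ := h
  refine ⟨σ.symm, ?_⟩
  rw [← hσ, Ultrafilter.map_map]
  have : (⇑σ.symm ∘ ⇑σ) = id := by ext x; simp
  rw [this, Ultrafilter.map_id]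

lemma invS_invS {X : Type*} (e : Set (X × X)) : invS (invS e) = e := rfl

/-- Pushing an ultrafilter along a choice function lands in `B^♯`. -/
lemma push_sharp (B : Set (Set ℕ)) (u : Ultrafilter ℕ) (e' : Set (ℕ × ℕ)) (D : Set ℕ)
    (hD : D ∈ u) (f : ℕ → ℕ) (hf : ∀ x ∈ D, f x ≠ x ∧ (x, f x) ∈ e')
    (hball : ∀ b ∈ B, (ballS (invS e') b)ᶜ ∈ u) :
    ∀ b ∈ B, (bᶜ : Set ℕ) ∈ Ultrafilter.map f u := by
  intro b hb
  rw [Ultrafilter.mem_map]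
  have : f ⁻¹' b ∉ u := by
    intro hmem
    obtain ⟨x, hx1, hx2, hx3⟩ := Ultrafilter.nonempty_of_mem
      (Filter.inter_mem hmem (Filter.inter_mem hD (hball b hb)))
    exact hx3 ⟨f x, hx1, (hf x hx2).2⟩
  have := Ultrafilter.compl_mem_iff_notMem.mpr this
  rwa [← Set.preimage_compl] at this

lemma halfmove (p q : Ultrafilter ℕ) (hp : FreeU p) (hq : FreeU q) (hne : p ≠ q)
    (hiso : ¬ UIso p q)
    (B : Set (Set ℕ))
    (hsharp : ∀ r : Ultrafilter ℕ, (∀ b ∈ B, (bᶜ : Set ℕ) ∈ r) → r = p ∨ r = q)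
    (e : Set (ℕ × ℕ))
    (he : ∀ b ∈ B, ballS e b ∈ B ∧ ballS (invS e) b ∈ B)
    (hBp : ∀ b ∈ B, (bᶜ : Set ℕ) ∈ p) (hBq : ∀ b ∈ B, (bᶜ : Set ℕ) ∈ q) :
    {x : ℕ | ∃ y, y ≠ x ∧ (x, y) ∈ e}ᶜ ∈ p := by
  classical
  by_contra hD1c
  have hD1 : {x : ℕ | ∃ y, y ≠ x ∧ (x, y) ∈ e} ∈ p := by
    by_contra h
    exact hD1c (Ultrafilter.compl_mem_iff_notMem.mpr h)
  set D₁ : Set ℕ := {x : ℕ | ∃ y, y ≠ x ∧ (x, y) ∈ e} with hD₁def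
  set f : ℕ → ℕ := fun x => if h : ∃ y, y ≠ x ∧ (x, y) ∈ e then h.choose else x with hfdef
  have hf : ∀ x ∈ D₁, f x ≠ x ∧ (x, f x) ∈ e := by
    intro x hx
    show (if h : ∃ y, y ≠ x ∧ (x, y) ∈ e then h.choose else x) ≠ x ∧ (x, (if h : ∃ y, y ≠ x ∧ (x, y) ∈ e then h.choose else x)) ∈ e
    split
    · next h => exact ⟨h.choose_spec.1, h.choose_spec.2⟩
    · next h => exact absurd hx h
  have hfp := hsharp (Ultrafilter.map f p)
    (push_sharp B p e D₁ hD1 f hf (fun b hb => hBp _ (he b hb).2))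
  rcases hfp with hfp | hfp
  · -- map f p = p : contradiction via fixed points
    have hfix := fix_mem f p hfp
    obtain ⟨x, hx1, hx2⟩ := Ultrafilter.nonempty_of_mem (Filter.inter_mem hD1 hfix)
    exact (hf x hx1).1 hx2
  · -- map f p = q
    set D₂ : Set ℕ := {y : ℕ | ∃ x, x ≠ y ∧ (x, y) ∈ e} with hD₂def
    have hD2q : D₂ ∈ q := by
      rw [← hfp, Ultrafilter.mem_map]
      refine Filter.mem_of_superset hD1 ?_
      intro x hx
      exact ⟨x, fun h => (hf x hx).1 h.symm, (hf x hx).2⟩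
    set g : ℕ → ℕ := fun y => if h : ∃ x, x ≠ y ∧ (x, y) ∈ e then h.choose else y with hgdef
    have hg : ∀ y ∈ D₂, g y ≠ y ∧ (y, g y) ∈ invS e := by
      intro y hy
      show (if h : ∃ x, x ≠ y ∧ (x, y) ∈ e then h.choose else y) ≠ y ∧ (y, (if h : ∃ x, x ≠ y ∧ (x, y) ∈ e then h.choose else y)) ∈ invS e
      split
      · next h => exact ⟨h.choose_spec.1, h.choose_spec.2⟩
      · next h => exact absurd hy h
    have hgq := hsharp (Ultrafilter.map g q)
      (push_sharp B q (invS e) D₂ hD2q g hg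
        (fun b hb => by rw [invS_invS]; exact hBq _ (he b hb).1))
    rcases hgq with hgq | hgq
    · exact hiso (rk hp hq hne f g hfp hgq)
    · have hfix := fix_mem g q hgq
      obtain ⟨y, hy1, hy2⟩ := Ultrafilter.nonempty_of_mem (Filter.inter_mem hD2q hfix)
      exact (hg y hy1).1 hy2


theorem stmt10 (p q : Ultrafilter ℕ) (hp : FreeU p) (hq : FreeU q)
    (hiso : ¬ UIso p q) :
    IsBornology {b : Set ℕ | bᶜ ∈ p ∧ bᶜ ∈ q} ∧
    sharp {b : Set ℕ | bᶜ ∈ p ∧ bᶜ ∈ q} = {p, q} ∧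
    downB {b : Set ℕ | bᶜ ∈ p ∧ bᶜ ∈ q} = upB {b : Set ℕ | bᶜ ∈ p ∧ bᶜ ∈ q} ∧
    ¬ ∃ u : Ultrafilter ℕ, ∀ A : Set ℕ, A ∈ u ↔ Aᶜ ∈ {b : Set ℕ | bᶜ ∈ p ∧ bᶜ ∈ q} := by
  classical
  have hne : p ≠ q := by
    rintro rfl
    exact hiso ⟨Equiv.refl ℕ, by rw [Equiv.coe_refl, Ultrafilter.map_id]⟩
  set B : Set (Set ℕ) := {b : Set ℕ | bᶜ ∈ p ∧ bᶜ ∈ q} with hBdef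
  have hBp : ∀ b ∈ B, (bᶜ : Set ℕ) ∈ p := fun b hb => hb.1
  have hBq : ∀ b ∈ B, (bᶜ : Set ℕ) ∈ q := fun b hb => hb.2
  have hsingle : ∀ (u : Ultrafilter ℕ), FreeU u → ∀ x : ℕ, ({x}ᶜ : Set ℕ) ∈ u := by
    intro u hu x
    rw [Ultrafilter.compl_mem_iff_notMem]
    intro h
    obtain ⟨y, _, h2⟩ := Ultrafilter.eq_pure_of_finite_mem (Set.finite_singleton x) h
    exact hu y h2
  have hBorn : IsBornology B := by
    constructor
    · ext x
      simp only [Set.mem_sUnion, Set.mem_univ, iff_true]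
      exact ⟨{x}, ⟨hsingle p hp x, hsingle q hq x⟩, rfl⟩
    · intro h
      rw [hBdef, Set.mem_setOf_eq, Set.compl_univ] at h
      exact Ultrafilter.empty_notMem h.1
    · intro b hb a ha
      exact ⟨Filter.mem_of_superset hb.1 (Set.compl_subset_compl.mpr ha),
             Filter.mem_of_superset hb.2 (Set.compl_subset_compl.mpr ha)⟩
    · intro b hb c hc
      rw [hBdef, Set.mem_setOf_eq, Set.compl_union]
      exact ⟨Filter.inter_mem hb.1 hc.1, Filter.inter_mem hb.2 hc.2⟩
  have hsharp : ∀ r : Ultrafilter ℕ, (∀ b ∈ B, (bᶜ : Set ℕ) ∈ r) → r = p ∨ r = q := by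
    intro r hr
    by_contra hcon
    push_neg at hcon
    obtain ⟨hrp, hrq⟩ := hcon
    obtain ⟨A, hA, hA'⟩ : ∃ A, A ∈ p ∧ Aᶜ ∈ r := by
      by_contra h
      push_neg at h
      refine hrp ?_
      refine (ult_eq_of_subset fun s hs => ?_).symm
      by_contra h2
      exact (h s hs) (Ultrafilter.compl_mem_iff_notMem.mpr h2)
    obtain ⟨C0, hC0, hC0'⟩ : ∃ C0, C0 ∈ q ∧ C0ᶜ ∈ r := by
      by_contra h
      push_neg at h
      refine hrq ?_
      refine (ult_eq_of_subset fun s hs => ?_).symm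
      by_contra h2
      exact (h s hs) (Ultrafilter.compl_mem_iff_notMem.mpr h2)
    obtain ⟨S, hS, hSc⟩ := exists_mem_compl_mem hne
    set C : Set ℕ := (A ∩ S) ∪ (C0 ∩ Sᶜ) with hCdef
    have hCp : C ∈ p := Filter.mem_of_superset (Filter.inter_mem hA hS) Set.subset_union_left
    have hCq : C ∈ q := Filter.mem_of_superset (Filter.inter_mem hC0 hSc) Set.subset_union_right
    have hCB : Cᶜ ∈ B := by
      rw [hBdef, Set.mem_setOf_eq, compl_compl]
      exact ⟨hCp, hCq⟩
    have hCr : C ∈ r := by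
      have := hr Cᶜ hCB
      rwa [compl_compl] at this
    have hCc : Cᶜ ∈ r := by
      refine Filter.mem_of_superset (Filter.inter_mem hA' hC0') ?_
      rintro x ⟨hx1, hx2⟩ hxC
      rcases hxC with ⟨h, _⟩ | ⟨h, _⟩
      · exact hx1 h
      · exact hx2 h
    exact (Ultrafilter.compl_mem_iff_notMem.mp hCc) hCr
  refine ⟨hBorn, ?_, ?_, ?_⟩
  · -- sharp B = {p, q}
    ext r
    constructor
    · intro hr
      rcases hsharp r hr with h | h
      · exact Or.inl h
      · exact Or.inr h
    · rintro (rfl | rfl)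
      · exact fun b hb => hb.1
      · exact fun b hb => hb.2
  · -- downB B = upB B
    apply Set.Subset.antisymm
    · rintro e ⟨hdiag, b, hbB, hsub⟩
      refine ⟨hdiag, fun a haB => ⟨?_, ?_⟩⟩
      · refine hBorn.subset_mem (b ∪ a) (hBorn.union_mem b hbB a haB) _ ?_
        rintro y ⟨x, hxa, hxy⟩
        rcases hsub hxy with h | h
        · exact Or.inl h.2
        · exact Or.inr (by rw [← show x = y from h]; exact hxa)
      · refine hBorn.subset_mem (b ∪ a) (hBorn.union_mem b hbB a haB) _ ?_
        rintro y ⟨x, hxa, hxy⟩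
        rcases hsub hxy with h | h
        · exact Or.inl h.1
        · exact Or.inr (by rw [show y = x from h]; exact hxa)
    · rintro e ⟨hdiag, hball⟩
      have hiso' : ¬ UIso q p := fun h => hiso (uiso_symm h)
      have hsharp' : ∀ r : Ultrafilter ℕ, (∀ b ∈ B, (bᶜ : Set ℕ) ∈ r) → r = q ∨ r = p :=
        fun r h => (hsharp r h).symm
      have heinv : ∀ b ∈ B, ballS (invS e) b ∈ B ∧ ballS (invS (invS e)) b ∈ B :=
        fun b hb => ⟨(hball b hb).2, by rw [invS_invS]; exact (hball b hb).1⟩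
      have hD1p := halfmove p q hp hq hne hiso B hsharp e hball hBp hBq
      have hD1q := halfmove q p hq hp hne.symm hiso' B hsharp' e hball hBq hBp
      have hD2p := halfmove p q hp hq hne hiso B hsharp (invS e) heinv hBp hBq
      have hD2q := halfmove q p hq hp hne.symm hiso' B hsharp' (invS e) heinv hBq hBp
      refine ⟨hdiag, {x : ℕ | ∃ y, y ≠ x ∧ (x, y) ∈ e} ∪
        {x : ℕ | ∃ y, y ≠ x ∧ (x, y) ∈ invS e}, ?_, ?_⟩
      · rw [hBdef, Set.mem_setOf_eq, Set.compl_union]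
        exact ⟨Filter.inter_mem hD1p hD2p, Filter.inter_mem hD1q hD2q⟩
      · rintro ⟨x, y⟩ hxy
        by_cases hxyeq : x = y
        · exact Or.inr hxyeq
        · refine Or.inl ⟨?_, ?_⟩
          · exact Or.inl ⟨y, fun h => hxyeq h.symm, hxy⟩
          · exact Or.inr ⟨x, hxyeq, hxy⟩
  · -- not ultradiscrete
    rintro ⟨u, hu⟩
    apply hne
    refine ult_eq_of_subset fun s hs => ?_
    have hsu : s ∈ u := by
      by_contra h
      have h1 : sᶜ ∈ u := Ultrafilter.compl_mem_iff_notMem.mpr h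
      have h2 := ((hu sᶜ).mp h1).1
      rw [compl_compl] at h2
      exact (Ultrafilter.compl_mem_iff_notMem.mp h2) hs
    have h3 := ((hu s).mp hsu).2
    rwa [compl_compl] at h3
end

section
/- If F is a nonempty closed subset of βω consisting of free ultrafilters that are pairwise non-isomorphic, then the family 𝓑 = {B ⊆ ω : ω∖B ∈ p for all p ∈ F} is a bornology on ω with 𝓑^♯ = F, and 𝓑 is minmax. -/
open Set

/-!
Write `𝓑` for the sets whose complements lie in every `p ∈ F`. Closedness of `F` gives
`𝓑^♯ = F`. For minimality, let `e` be an entourage of the largest compatible coarse structure and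
suppose the set of points that `e` moves to another point lies in some `p ∈ F`. Choosing
`(x, f x) ∈ e`, either `f` or "the previous point of the same `f`-fibre" is, on a member of `p`,
a fixed-point-free injection `g` that stays within `e ∘ e⁻¹` of the identity; it agrees with a
permutation `G` of `ℕ` on a smaller member of `p`. Now `G_* p ∈ F`, since a bounded `b ∈ G_* p`
would put the bounded set `(e ∘ e⁻¹)[b]` into `p`, while `G_* p ≠ p` by Katětov's three-set
argument. This contradicts the pairwise non-isomorphism of the points of `F`.
-/

open Function

theorem Set.InjOn.exists_perm_eqOn {α : Type*} [Countable α] {g : α → α} {A : Set α}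
    (hg : InjOn g A) (hA : Aᶜ.Infinite) (hgA : (g '' A)ᶜ.Infinite) :
    ∃ G : Equiv.Perm α, EqOn G g A := by
  classical
  have := hA.to_subtype
  have := hgA.to_subtype
  obtain ⟨e⟩ : Nonempty (↥Aᶜ ≃ ↥(g '' A)ᶜ) := nonempty_equiv_of_countable
  refine ⟨Equiv.subtypeCongr (Equiv.Set.imageOfInjOn g A hg) e, fun x hx => ?_⟩
  simp [Equiv.subtypeCongr, Equiv.sumCompl, hx]
  rfl

/-- Katětov's decomposition: `M` is a maximal set that `g` maps off itself. -/
theorem exists_mapsTo_compl_cover {α : Type*} (g : α → α) :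
    ∃ M : Set α, MapsTo g M Mᶜ ∧ ∀ x, g x ≠ x → x ∈ M ∪ g ⁻¹' M ∪ g '' M := by
  obtain ⟨M, hM⟩ := zorn_subset {M : Set α | MapsTo g M Mᶜ} fun c hc hchain => by
    refine ⟨⋃₀ c, ?_, fun s hs => subset_sUnion_of_mem hs⟩
    rintro x ⟨s, hs, hxs⟩ ⟨t, ht, hgxt⟩
    rcases hchain.total hs ht with hst | hts
    · exact hc ht (hst hxs) hgxt
    · exact hc hs hxs (hts hgxt)
  refine ⟨M, hM.prop, fun x hgx => by_contra fun hx => ?_⟩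
  simp only [mem_union, mem_preimage, mem_image, not_or, not_exists, not_and] at hx
  obtain ⟨⟨hxM, hgxM⟩, hximg⟩ := hx
  have hins : MapsTo g (insert x M) (insert x M)ᶜ := by
    rintro y (rfl | hy)
    · exact fun h => h.elim hgx hgxM
    · exact fun h => h.elim (hximg y hy) (hM.prop hy)
  exact hxM (hM.2 hins (subset_insert x M) (mem_insert x M))

theorem Ultrafilter.map_ne_self {α : Type*} {g : α → α} (hg : Injective g) {p : Ultrafilter α}
    {A : Set α} (hA : A ∈ p) (hmove : ∀ x ∈ A, g x ≠ x) : p.map g ≠ p := by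
  intro hp
  have hpre : ∀ s, g ⁻¹' s ∈ p ↔ s ∈ p := fun s => by rw [← Ultrafilter.mem_map, hp]
  obtain ⟨M, hMg, hcover⟩ := exists_mapsTo_compl_cover g
  have hM : M ∈ p := by
    have hU : M ∪ g ⁻¹' M ∪ g '' M ∈ p :=
      Filter.mem_of_superset hA fun x hx => hcover x (hmove x hx)
    rcases Ultrafilter.union_mem_iff.1 hU with h | h
    · rcases Ultrafilter.union_mem_iff.1 h with h | h
      · exact h
      · exact (hpre M).1 h
    · rwa [← hpre, preimage_image_eq M hg] at h
  obtain ⟨x, hx, hgx⟩ := Ultrafilter.nonempty_of_mem (Filter.inter_mem hM ((hpre M).2 hM))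
  exact hMg hx hgx

theorem Ultrafilter.exists_mem_compl_infinite (p : Ultrafilter ℕ) : ∃ T ∈ p, Tᶜ.Infinite := by
  rcases p.mem_or_compl_mem {n | n % 2 = 0} with h | h
  · exact ⟨_, h, infinite_of_forall_exists_gt fun a => ⟨2 * a + 1, by simp; omega⟩⟩
  · exact ⟨_, h, infinite_of_forall_exists_gt fun a => ⟨2 * a + 2, by simp; omega⟩⟩

theorem Ultrafilter.exists_perm_eqOn {p : Ultrafilter ℕ} {g : ℕ → ℕ} {S : Set ℕ} (hS : S ∈ p)
    (hg : InjOn g S) : ∃ G : Equiv.Perm ℕ, ∃ A ∈ p, A ⊆ S ∧ EqOn G g A := by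
  obtain ⟨T₁, hT₁, hT₁c⟩ := p.exists_mem_compl_infinite
  obtain ⟨T₂, hT₂, hT₂c⟩ := (p.map g).exists_mem_compl_infinite
  obtain ⟨G, hG⟩ := (hg.mono (inter_subset_left.trans inter_subset_left)).exists_perm_eqOn
    (hT₁c.mono (compl_subset_compl.2 (inter_subset_left.trans inter_subset_right)))
    (hT₂c.mono (compl_subset_compl.2 (image_subset_iff.2 inter_subset_right)))
  exact ⟨G, S ∩ T₁ ∩ g ⁻¹' T₂, Filter.inter_mem (Filter.inter_mem hS hT₁) hT₂,
    inter_subset_left.trans inter_subset_left, hG⟩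

section FiberPred

variable {β : Type*} {f : ℕ → β}

theorem injOn_of_not_exists_lt : InjOn f {x | ¬ ∃ z < x, f z = f x} := by
  intro x₁ hx₁ x₂ hx₂ h
  rcases lt_trichotomy x₁ x₂ with hlt | heq | hlt
  · exact absurd ⟨x₁, hlt, h⟩ hx₂
  · exact heq
  · exact absurd ⟨x₂, hlt, h.symm⟩ hx₁

variable [DecidableEq β]

/-- The largest point below `x` in the same fibre of `f` (junk value `0` if there is none). -/
def fiberPred (f : ℕ → β) (x : ℕ) : ℕ := Nat.findGreatest (fun z => z < x ∧ f z = f x) x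

theorem fiberPred_spec {x : ℕ} (hx : ∃ z < x, f z = f x) :
    fiberPred f x < x ∧ f (fiberPred f x) = f x := by
  obtain ⟨z, hzx, hfz⟩ := hx
  exact Nat.findGreatest_spec (P := fun z => z < x ∧ f z = f x) hzx.le ⟨hzx, hfz⟩

theorem injOn_fiberPred : InjOn (fiberPred f) {x | ∃ z < x, f z = f x} := by
  intro x₁ hx₁ x₂ hx₂ h
  wlog hlt : x₁ < x₂ generalizing x₁ x₂
  · rcases (not_lt.1 hlt).lt_or_eq with hlt' | heq
    · exact (this hx₂ hx₁ h.symm hlt').symm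
    · exact heq.symm
  have hf : f x₁ = f x₂ := by rw [← (fiberPred_spec hx₁).2, h, (fiberPred_spec hx₂).2]
  have hle : x₁ ≤ fiberPred f x₂ :=
    Nat.le_findGreatest (P := fun z => z < x₂ ∧ f z = f x₂) hlt.le ⟨hlt, hf⟩
  exact absurd ((fiberPred_spec hx₁).1.trans_le (h ▸ hle)) (lt_irrefl _)

end FiberPred

section Bornology

variable {X : Type*}

theorem ballS_compS (e e' : Set (X × X)) (a : Set X) :
    ballS (compS e e') a = ballS e' (ballS e a) := by
  ext y
  constructor
  · rintro ⟨x, hx, z, hxz, hzy⟩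
    exact ⟨z, ⟨x, hx, hxz⟩, hzy⟩
  · rintro ⟨z, ⟨x, hx, hxz⟩, hzy⟩
    exact ⟨x, hx, z, hxz, hzy⟩

theorem ballS_subset_union {e : Set (X × X)} {b : Set X} (he : e ⊆ b ×ˢ b ∪ diagS X)
    (a : Set X) : ballS e a ⊆ a ∪ b := by
  rintro y ⟨x, hxa, hxy⟩
  rcases he hxy with h | (rfl : x = y)
  · exact Or.inr h.2
  · exact Or.inl hxa

theorem downB_subset_upB {B : Set (Set X)} (hB : IsBornology B) : downB B ⊆ upB B := by
  rintro e ⟨hdiag, b, hb, he⟩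
  have he' : invS e ⊆ b ×ˢ b ∪ diagS X := fun z hz => (he hz).imp (fun h => ⟨h.2, h.1⟩) Eq.symm
  exact ⟨hdiag, fun a ha => ⟨hB.subset_mem _ (hB.union_mem a ha b hb) _ (ballS_subset_union he a),
    hB.subset_mem _ (hB.union_mem a ha b hb) _ (ballS_subset_union he' a)⟩⟩

def offDiagDom (e : Set (X × X)) : Set X := {x | ∃ y, y ≠ x ∧ (x, y) ∈ e}

theorem upB_subset_downB {B : Set (Set X)} (hB : IsBornology B)
    (h : ∀ e ∈ upB B, offDiagDom e ∈ B) : upB B ⊆ downB B := by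
  intro e he
  have he' : invS e ∈ upB B :=
    ⟨fun z hz => he.1 (Eq.symm hz), fun a ha => ⟨(he.2 a ha).2, (he.2 a ha).1⟩⟩
  refine ⟨he.1, _, hB.union_mem _ (h e he) _ (h _ he'), ?_⟩
  rintro ⟨x, y⟩ hxy
  by_cases hxy' : x = y
  · exact Or.inr hxy'
  · exact Or.inl ⟨Or.inl ⟨y, Ne.symm hxy', hxy⟩, Or.inr ⟨x, hxy', hxy⟩⟩

/-- The sets whose closure in the Stone–Čech compactification misses `F`. -/
def bornologyOf (F : Set (Ultrafilter X)) : Set (Set X) := {b | ∀ p ∈ F, bᶜ ∈ p}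

theorem FreeU.compl_singleton_mem {p : Ultrafilter X} (hp : FreeU p) (x : X) : {x}ᶜ ∈ p := by
  refine Ultrafilter.compl_mem_iff_notMem.2 fun hx => ?_
  obtain ⟨y, rfl, hpy⟩ := Ultrafilter.eq_pure_of_finite_mem (finite_singleton x) hx
  exact hp y hpy

variable {F : Set (Ultrafilter X)}

theorem isBornology_bornologyOf (hne : F.Nonempty) (hfree : ∀ p ∈ F, FreeU p) :
    IsBornology (bornologyOf F) where
  cover := eq_univ_of_forall fun x => ⟨{x}, fun p hp => (hfree p hp).compl_singleton_mem x, rfl⟩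
  univ_not_mem h := by
    obtain ⟨p, hp⟩ := hne
    simpa using h p hp
  subset_mem b hb a hab p hp := Filter.mem_of_superset (hb p hp) (compl_subset_compl.2 hab)
  union_mem b hb c hc p hp := by
    rw [compl_union]
    exact Filter.inter_mem (hb p hp) (hc p hp)

theorem exists_mem_bornologyOf_of_notMem (hcl : IsClosed F) {q : Ultrafilter X} (hq : q ∉ F) :
    ∃ b ∈ bornologyOf F, b ∈ q := by
  obtain ⟨_, ⟨s, rfl⟩, hqs, hsF⟩ :=
    ultrafilterBasis_is_basis.exists_subset_of_mem_open hq hcl.isOpen_compl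
  exact ⟨s, fun p hp => Ultrafilter.compl_mem_iff_notMem.2 fun hs => hsF hs hp, hqs⟩

theorem sharp_bornologyOf (hcl : IsClosed F) : sharp (bornologyOf F) = F := by
  refine Subset.antisymm (fun q hq => by_contra fun hqF => ?_) fun p hp b hb => hb p hp
  obtain ⟨b, hb, hbq⟩ := exists_mem_bornologyOf_of_notMem hcl hqF
  exact Ultrafilter.compl_mem_iff_notMem.1 (hq b hb) hbq

theorem map_mem_of_forall_mem_entourage {c : Set (X × X)}
    (hc : ∀ b ∈ bornologyOf F, ballS c b ∈ bornologyOf F) (hcl : IsClosed F) {p : Ultrafilter X}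
    (hp : p ∈ F) {g : X → X} {A : Set X} (hA : A ∈ p) (hgc : ∀ x ∈ A, (g x, x) ∈ c) :
    p.map g ∈ F := by
  by_contra hq
  obtain ⟨b, hb, hbq⟩ := exists_mem_bornologyOf_of_notMem hcl hq
  have hsub : g ⁻¹' b ∩ A ⊆ ballS c b := fun x hx => ⟨g x, hx.1, hgc x hx.2⟩
  exact Ultrafilter.compl_mem_iff_notMem.1 (hc b hb p hp)
    (Filter.mem_of_superset (Filter.inter_mem (Ultrafilter.mem_map.1 hbq) hA) hsub)

end Bornology

section Remainder

variable {F : Set (Ultrafilter ℕ)}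

theorem notMem_of_injOn (hcl : IsClosed F) (hiso : ∀ p ∈ F, ∀ q ∈ F, p ≠ q → ¬ UIso p q)
    {c : Set (ℕ × ℕ)}
    (hc : ∀ b ∈ bornologyOf F, ballS c b ∈ bornologyOf F) {p : Ultrafilter ℕ} (hp : p ∈ F)
    {g : ℕ → ℕ} {S : Set ℕ} (hg : InjOn g S) (hgS : ∀ x ∈ S, g x ≠ x ∧ (g x, x) ∈ c) :
    S ∉ p := by
  intro hS
  obtain ⟨G, A, hA, hAS, hG⟩ := Ultrafilter.exists_perm_eqOn hS hg
  have hmap : p.map G ∈ F :=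
    map_mem_of_forall_mem_entourage hc hcl hp hA fun x hx => hG hx ▸ (hgS x (hAS hx)).2
  have hne : p.map G ≠ p :=
    Ultrafilter.map_ne_self G.injective hA fun x hx => hG hx ▸ (hgS x (hAS hx)).1
  exact hiso p hp _ hmap hne.symm ⟨G, rfl⟩

theorem offDiagDom_mem_bornologyOf (hcl : IsClosed F)
    (hiso : ∀ p ∈ F, ∀ q ∈ F, p ≠ q → ¬ UIso p q) {e : Set (ℕ × ℕ)} (he : e ∈ upB (bornologyOf F)) :
    offDiagDom e ∈ bornologyOf F := by
  intro p hp
  rw [Ultrafilter.compl_mem_iff_notMem]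
  intro hD
  have hc : ∀ b ∈ bornologyOf F, ballS (compS e (invS e)) b ∈ bornologyOf F := fun b hb => by
    rw [ballS_compS]
    exact (he.2 _ (he.2 b hb).1).2
  have : ∀ x, ∃ y, (x, y) ∈ e ∧ (x ∈ offDiagDom e → y ≠ x) := fun x => by
    by_cases hx : x ∈ offDiagDom e
    · obtain ⟨y, hyx, hxy⟩ := hx
      exact ⟨y, hxy, fun _ => hyx⟩
    · exact ⟨x, he.1 rfl, fun h => absurd h hx⟩
  choose f hfe hfne using this
  have hfiber : ∀ x y, f x = f y → (x, y) ∈ compS e (invS e) :=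
    fun x y h => ⟨f x, hfe x, h ▸ hfe y⟩
  -- Off the least points of the `f`-fibres use `fiberPred f`; on them `f` itself is injective.
  rcases p.mem_or_compl_mem {x | ∃ z < x, f z = f x} with hL | hL
  · refine notMem_of_injOn hcl hiso hc hp injOn_fiberPred (fun x hx => ?_) hL
    exact ⟨(fiberPred_spec hx).1.ne, hfiber _ _ (fiberPred_spec hx).2⟩
  · refine notMem_of_injOn hcl hiso hc hp (InjOn.mono inter_subset_left injOn_of_not_exists_lt)
      (fun x hx => ⟨hfne x hx.2, f x, he.1 rfl, hfe x⟩) (Filter.inter_mem hL hD)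

end Remainder

theorem stmt11 (F : Set (Ultrafilter ℕ)) (hne : F.Nonempty) (hcl : IsClosed F)
    (hfree : ∀ p ∈ F, FreeU p)
    (hiso : ∀ p ∈ F, ∀ q ∈ F, p ≠ q → ¬ UIso p q) :
    IsBornology {b : Set ℕ | ∀ p ∈ F, bᶜ ∈ p} ∧
    sharp {b : Set ℕ | ∀ p ∈ F, bᶜ ∈ p} = F ∧
    downB {b : Set ℕ | ∀ p ∈ F, bᶜ ∈ p} = upB {b : Set ℕ | ∀ p ∈ F, bᶜ ∈ p} := by
  have hB : IsBornology (bornologyOf F) := isBornology_bornologyOf hne hfree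
  exact ⟨hB, sharp_bornologyOf hcl, (downB_subset_upB hB).antisymm
    (upB_subset_downB hB fun _ he => offDiagDom_mem_bornologyOf hcl hiso he)⟩
end

section
/- Every infinite closed subset of βω has cardinality either at most ℵ₀ or exactly 2^𝔠; in particular every infinite closed subset of βω∖ω has cardinality 2^𝔠. -/
open Set

open Filter Set Cardinal Function

section Stmt13Aux

lemma s13_mem_joinM_map (D : ℕ → Ultrafilter ℕ) (u : Ultrafilter ℕ) (s : Set ℕ) :
    s ∈ joinM (Ultrafilter.map D u) ↔ {n | s ∈ D n} ∈ u := by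
  change s ∈ ((Filter.map D ↑u).bind fun x => ↑x) ↔ _
  rw [Filter.mem_bind', Filter.mem_map]; rfl

lemma s13_exists_sep {p q : Ultrafilter ℕ} (h : p ≠ q) : ∃ S : Set ℕ, S ∈ p ∧ Sᶜ ∈ q := by
  by_contra hc
  push_neg at hc
  refine h (Ultrafilter.coe_le_coe.mp fun S hS => ?_).symm
  have := hc S hS
  rwa [Ultrafilter.compl_mem_iff_notMem, not_not] at this

/-- one step of the separation recursion -/
lemma s13_step {F T : Set (Ultrafilter ℕ)} {C : Set ℕ}
    (hT : T.Infinite) (hTF : T ⊆ F) (hC : ∀ r ∈ T, C ∈ r) :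
    ∃ o : Ultrafilter ℕ × Set ℕ × Set (Ultrafilter ℕ) × Set ℕ,
      (o.1 ∈ F ∧ o.2.1 ∈ o.1 ∧ o.2.1 ⊆ C ∧ (∀ n ∈ o.2.1, n ∉ o.2.2.2)) ∧
      (o.2.2.2 ⊆ C ∧ o.2.2.1.Infinite ∧ o.2.2.1 ⊆ F ∧ ∀ r ∈ o.2.2.1, o.2.2.2 ∈ r) := by
  obtain ⟨p, hp⟩ := hT.nonempty
  obtain ⟨q, hq⟩ := (hT.diff (finite_singleton p)).nonempty
  have hpq : p ≠ q := fun h => hq.2 (by simp [h])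
  obtain ⟨S, hSp, hSq⟩ := s13_exists_sep hpq
  have hsplit : T ⊆ {r ∈ T | S ∈ r} ∪ {r ∈ T | Sᶜ ∈ r} := by
    intro r hr
    by_cases h : S ∈ r
    · exact Or.inl ⟨hr, h⟩
    · exact Or.inr ⟨hr, Ultrafilter.compl_mem_iff_notMem.mpr h⟩
  rcases Set.infinite_union.mp (hT.mono hsplit) with h1 | h2
  · -- S-side infinite: keep q with A = C ∩ Sᶜ, recurse into C ∩ S
    exact ⟨(q, C ∩ Sᶜ, {r ∈ T | S ∈ r}, C ∩ S),
      ⟨hTF hq.1, inter_mem (hC q hq.1) hSq, inter_subset_left,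
        fun n hn hn' => hn.2 hn'.2⟩,
      inter_subset_left, h1, fun r hr => hTF hr.1,
      fun r hr => inter_mem (hC r hr.1) hr.2⟩
  · exact ⟨(p, C ∩ S, {r ∈ T | Sᶜ ∈ r}, C ∩ Sᶜ),
      ⟨hTF hp, inter_mem (hC p hp) hSp, inter_subset_left,
        fun n hn hn' => hn'.2 hn.2⟩,
      inter_subset_left, h2, fun r hr => hTF hr.1,
      fun r hr => inter_mem (hC r hr.1) hr.2⟩

lemma s13_exists_disjoint_seq {F : Set (Ultrafilter ℕ)} (hinf : F.Infinite) :
    ∃ (D : ℕ → Ultrafilter ℕ) (A : ℕ → Set ℕ),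
      (∀ n, D n ∈ F) ∧ (∀ n, A n ∈ D n) ∧
      ∀ m n, m ≠ n → ∀ x, x ∈ A m → x ∉ A n := by
  classical
  have hstep : ∀ s : Set (Ultrafilter ℕ) × Set ℕ,
      s.1.Infinite → s.1 ⊆ F → (∀ r ∈ s.1, s.2 ∈ r) →
      ∃ o : Ultrafilter ℕ × Set ℕ × Set (Ultrafilter ℕ) × Set ℕ,
        (o.1 ∈ F ∧ o.2.1 ∈ o.1 ∧ o.2.1 ⊆ s.2 ∧ (∀ n ∈ o.2.1, n ∉ o.2.2.2)) ∧
        (o.2.2.2 ⊆ s.2 ∧ o.2.2.1.Infinite ∧ o.2.2.1 ⊆ F ∧ ∀ r ∈ o.2.2.1, o.2.2.2 ∈ r) :=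
    fun s h1 h2 h3 => s13_step h1 h2 h3
  choose! nxt hmain hrec using hstep
  set st : ℕ → Set (Ultrafilter ℕ) × Set ℕ := fun n => (fun s => (nxt s).2.2)^[n] (F, Set.univ)
    with hstdef
  have hstsucc : ∀ n, st (n + 1) = (nxt (st n)).2.2 := fun n => by
    rw [hstdef]; exact Function.iterate_succ_apply' _ _ _
  have inv : ∀ n, (st n).1.Infinite ∧ (st n).1 ⊆ F ∧ ∀ r ∈ (st n).1, (st n).2 ∈ r := by
    intro n
    induction n with
    | zero => exact ⟨hinf, subset_rfl, fun r _ => Filter.univ_mem⟩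
    | succ n ih =>
        have h := hrec (st n) ih.1 ih.2.1 ih.2.2
        rw [hstsucc n]
        exact ⟨h.2.1, h.2.2.1, h.2.2.2⟩
  have hm : ∀ n, (nxt (st n)).1 ∈ F ∧ (nxt (st n)).2.1 ∈ (nxt (st n)).1 ∧
      (nxt (st n)).2.1 ⊆ (st n).2 ∧ ∀ x ∈ (nxt (st n)).2.1, x ∉ (st (n + 1)).2 := by
    intro n
    have h := hmain (st n) (inv n).1 (inv n).2.1 (inv n).2.2
    exact ⟨h.1, h.2.1, h.2.2.1, by rw [hstsucc n]; exact h.2.2.2⟩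
  have hCmono : ∀ m n, m ≤ n → (st n).2 ⊆ (st m).2 := by
    intro m n hmn
    induction n, hmn using Nat.le_induction with
    | base => exact subset_rfl
    | succ n hmn ih =>
        refine subset_trans ?_ ih
        rw [hstsucc n]
        exact (hrec (st n) (inv n).1 (inv n).2.1 (inv n).2.2).1
  have hdisj : ∀ m n, m < n → ∀ x, x ∈ (nxt (st m)).2.1 → x ∉ (nxt (st n)).2.1 := by
    intro m n hmn x hxm hxn
    have h1 : x ∈ (st n).2 := (hm n).2.2.1 hxn
    have h2 : x ∈ (st (m + 1)).2 := hCmono (m + 1) n hmn h1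
    exact (hm m).2.2.2 x hxm h2
  refine ⟨fun n => (nxt (st n)).1, fun n => (nxt (st n)).2.1,
    fun n => (hm n).1, fun n => (hm n).2.1, ?_⟩
  intro m n hmn x hxm hxn
  rcases lt_or_gt_of_ne hmn with h | h
  · exact hdisj m n h x hxm hxn
  · exact hdisj n m h x hxn hxm

/-- membership set of the independent family -/
def s13XA (A : Set ℕ) : Set (Finset ℕ × Finset (Finset ℕ)) :=
  {x | ∃ t ∈ x.2, (t : Set ℕ) = A ∩ (x.1 : Set ℕ)}

lemma s13_indep (S : Set (Set ℕ)) :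
    ∃ u : Ultrafilter (Finset ℕ × Finset (Finset ℕ)),
      ∀ A : Set ℕ, (A ∈ S → s13XA A ∈ u) ∧ (A ∉ S → (s13XA A)ᶜ ∈ u) := by
  classical
  have hfip : ∀ T : Finset (Set (Finset ℕ × Finset (Finset ℕ))),
      (↑T : Set (Set (Finset ℕ × Finset (Finset ℕ)))) ⊆
        (Set.range fun A : Set ℕ => if A ∈ S then s13XA A else (s13XA A)ᶜ) →
      (⋂₀ (↑T : Set (Set (Finset ℕ × Finset (Finset ℕ))))).Nonempty := by
    intro T hTsub
    -- choose witnesses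
    have hw : ∀ t ∈ T, ∃ A : Set ℕ, (if A ∈ S then s13XA A else (s13XA A)ᶜ) = t := by
      intro t ht
      exact hTsub ht
    choose! w hwspec using hw
    set Win : Set (Set ℕ) := w '' {t | t ∈ (T : Set (Set (Finset ℕ × Finset (Finset ℕ)))) ∧ w t ∈ S} with hWin
    set Wout : Set (Set ℕ) := w '' {t | t ∈ (T : Set (Set (Finset ℕ × Finset (Finset ℕ)))) ∧ w t ∉ S} with hWout
    have hWinfin : Win.Finite := (T.finite_toSet.subset (sep_subset _ _)).image w
    have hWoutfin : Wout.Finite := (T.finite_toSet.subset (sep_subset _ _)).image w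
    -- separating points
    have hsep : ∀ A ∈ Win, ∀ B ∈ Wout, ∃ n : ℕ, ¬(n ∈ A ↔ n ∈ B) := by
      rintro A ⟨t1, ht1, rfl⟩ B ⟨t2, ht2, rfl⟩
      have hne : w t1 ≠ w t2 := fun h => ht2.2 (h ▸ ht1.2)
      by_contra hcon
      push_neg at hcon
      exact hne (Set.ext fun n => hcon n)
    choose! pt hpt using hsep
    set F0 : Set ℕ := Set.image2 pt Win Wout with hF0
    have hF0fin : F0.Finite := hWinfin.image2 pt hWoutfin
    set Fs : Finset ℕ := hF0fin.toFinset with hFs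
    have hGfin : ((fun A : Set ℕ => Fs.filter (fun n => n ∈ A)) '' Win).Finite :=
      hWinfin.image _
    set Gs : Finset (Finset ℕ) := hGfin.toFinset with hGs
    refine ⟨(Fs, Gs), ?_⟩
    rw [Set.mem_sInter]
    intro t ht
    rw [Finset.mem_coe] at ht
    have hspec := hwspec t ht
    by_cases hS : w t ∈ S
    · rw [if_pos hS] at hspec
      rw [← hspec]
      refine ⟨Fs.filter (fun n => n ∈ w t), ?_, ?_⟩
      · rw [hGs, Set.Finite.mem_toFinset]
        exact ⟨w t, ⟨t, ⟨ht, hS⟩, rfl⟩, rfl⟩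
      · simp only [Finset.coe_filter]
        ext n
        simp only [Set.mem_setOf_eq, Set.mem_inter_iff, Finset.mem_coe]
        tauto
    · rw [if_neg hS] at hspec
      rw [← hspec]
      rintro ⟨t', ht', hco⟩
      rw [hGs, Set.Finite.mem_toFinset] at ht'
      obtain ⟨A, hAWin, rfl⟩ := ht'
      have hBWout : w t ∈ Wout := ⟨t, ⟨ht, hS⟩, rfl⟩
      have hn := hpt A hAWin (w t) hBWout
      set n := pt A (w t) with hndef
      have hnF : n ∈ Fs := by
        rw [hFs, Set.Finite.mem_toFinset]
        exact Set.mem_image2_of_mem hAWin hBWout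
      apply hn
      have h1 : (n ∈ A ∧ n ∈ (Fs : Set ℕ)) ↔ n ∈ w t ∧ n ∈ (Fs : Set ℕ) := by
        constructor
        · intro hcase
          have : n ∈ (↑(Fs.filter (fun m => m ∈ A)) : Set ℕ) := by
            simp only [Finset.coe_filter, Set.mem_setOf_eq, Finset.mem_coe]
            exact ⟨hcase.2, hcase.1⟩
          rw [hco] at this
          exact ⟨this.1, hcase.2⟩
        · intro hcase
          have : n ∈ w t ∩ (Fs : Set ℕ) := ⟨hcase.1, hcase.2⟩
          rw [← hco] at this
          simp only [Finset.coe_filter, Set.mem_setOf_eq, Finset.mem_coe] at this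
          exact ⟨this.2, hcase.2⟩
      constructor
      · intro hA; exact (h1.mp ⟨hA, hnF⟩).1
      · intro hB; exact (h1.mpr ⟨hB, hnF⟩).1
  obtain ⟨u, hu⟩ := Ultrafilter.exists_ultrafilter_of_finite_inter_nonempty
    (Set.range fun A : Set ℕ => if A ∈ S then s13XA A else (s13XA A)ᶜ) hfip
  refine ⟨u, fun A => ⟨fun hA => ?_, fun hA => ?_⟩⟩
  · have := hu (Set.mem_range_self (f := fun A : Set ℕ =>
      if A ∈ S then s13XA A else (s13XA A)ᶜ) A)
    rwa [if_pos hA] at this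
  · have := hu (Set.mem_range_self (f := fun A : Set ℕ =>
      if A ∈ S then s13XA A else (s13XA A)ᶜ) A)
    rwa [if_neg hA] at this

lemma s13_exists_inj : ∃ f : Set (Set ℕ) → Ultrafilter ℕ, Function.Injective f := by
  classical
  choose u hu using s13_indep
  obtain ⟨i, hi⟩ := Countable.exists_injective_nat (Finset ℕ × Finset (Finset ℕ))
  refine ⟨fun S => (u S).map i, fun S S' h => ?_⟩
  replace h : (u S).map i = (u S').map i := h
  ext A
  constructor
  · intro hA
    by_contra hA'
    have h1 : s13XA A ∈ u S := (hu S A).1 hA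
    have h2 : (s13XA A)ᶜ ∈ u S' := (hu S' A).2 hA'
    have h3 : i '' s13XA A ∈ (u S).map i :=
      Ultrafilter.mem_map.mpr (by rwa [hi.preimage_image])
    rw [h] at h3
    have h4 : s13XA A ∈ u S' := by
      have := Ultrafilter.mem_map.mp h3
      rwa [hi.preimage_image] at this
    exact (Ultrafilter.compl_mem_iff_notMem.mp h2) h4
  · intro hA
    by_contra hA'
    have h1 : s13XA A ∈ u S' := (hu S' A).1 hA
    have h2 : (s13XA A)ᶜ ∈ u S := (hu S A).2 hA'
    have h3 : i '' s13XA A ∈ (u S').map i :=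
      Ultrafilter.mem_map.mpr (by rwa [hi.preimage_image])
    rw [← h] at h3
    have h4 : s13XA A ∈ u S := by
      have := Ultrafilter.mem_map.mp h3
      rwa [hi.preimage_image] at this
    exact (Ultrafilter.compl_mem_iff_notMem.mp h2) h4

lemma s13_key {F : Set (Ultrafilter ℕ)} (hcl : IsClosed F) (hinf : F.Infinite) :
    Cardinal.mk F = 2 ^ Cardinal.continuum := by
  obtain ⟨D, A, hDF, hAD, hdisj⟩ := s13_exists_disjoint_seq hinf
  -- the limit map
  set Φ : Ultrafilter ℕ → Ultrafilter ℕ := fun v => joinM (Ultrafilter.map D v) with hΦ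
  have hΦF : ∀ v, Φ v ∈ F := by
    intro v
    have h1 : Φ v ∈ closure F := by
      rw [mem_closure_iff_ultrafilter]
      refine ⟨Ultrafilter.map D v, ?_, ultrafilter_converges_iff.mpr rfl⟩
      exact Ultrafilter.mem_map.mpr (Filter.mem_of_superset Filter.univ_mem fun n _ => hDF n)
    rwa [hcl.closure_eq] at h1
  have hΦinj : Function.Injective Φ := by
    intro v v' hvv'
    by_contra hne
    obtain ⟨S, hSv, hSv'⟩ := s13_exists_sep hne
    set W : Set ℕ := ⋃ n ∈ S, A n with hW
    have h1 : W ∈ Φ v := by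
      rw [hΦ, s13_mem_joinM_map]
      refine Filter.mem_of_superset hSv fun n hn => ?_
      exact Filter.mem_of_superset (hAD n) (Set.subset_biUnion_of_mem hn)
    have h2 : Wᶜ ∈ Φ v' := by
      rw [hΦ, s13_mem_joinM_map]
      refine Filter.mem_of_superset hSv' fun n hn => ?_
      refine Filter.mem_of_superset (hAD n) fun x hx => ?_
      intro hxW
      rw [hW] at hxW
      simp only [Set.mem_iUnion] at hxW
      obtain ⟨m, hmS, hxm⟩ := hxW
      exact hdisj n m (fun h => hn (h ▸ hmS)) x hx hxm
    rw [← hvv'] at h2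
    exact (Ultrafilter.compl_mem_iff_notMem.mp h2) h1
  obtain ⟨f, hf⟩ := s13_exists_inj
  apply le_antisymm
  · calc Cardinal.mk F ≤ Cardinal.mk (Ultrafilter ℕ) := Cardinal.mk_set_le F
      _ ≤ Cardinal.mk (Set (Set ℕ)) := by
          refine Cardinal.mk_le_of_injective (f := fun u : Ultrafilter ℕ => {s : Set ℕ | s ∈ u})
            fun u v h => ?_
          exact Ultrafilter.coe_injective (Filter.ext fun s => Set.ext_iff.mp h s)
      _ = 2 ^ Cardinal.continuum := by simp [mk_set, two_power_aleph0]
  · calc (2 : Cardinal) ^ Cardinal.continuum = Cardinal.mk (Set (Set ℕ)) := by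
          simp [mk_set, two_power_aleph0]
      _ ≤ Cardinal.mk F := by
          refine Cardinal.mk_le_of_injective
            (f := fun S => (⟨Φ (f S), hΦF (f S)⟩ : F)) fun S S' h => ?_
          exact hf (hΦinj (congrArg Subtype.val h))

end Stmt13Aux


theorem stmt13 :
    (∀ F : Set (Ultrafilter ℕ), IsClosed F → F.Infinite →
      F.Countable ∨ Cardinal.mk F = 2 ^ Cardinal.continuum) ∧
    (∀ F : Set (Ultrafilter ℕ), F ⊆ remainder → IsClosed F → F.Infinite →
      Cardinal.mk F = 2 ^ Cardinal.continuum) := by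
  constructor
  · intro F hcl hinf
    exact Or.inr (s13_key hcl hinf)
  · intro F _ hcl hinf
    exact s13_key hcl hinf
end

section
/- For the coarse structure 𝓔 on ω induced by the group of finitely supported permutations of ω, the entourage E = ⋃_{n∈ω} [n², (n+1)²) × [n², (n+1)²) belongs to the largest coarse structure compatible with the bornology of finite sets, but does not belong to 𝓔. -/
open Set

private lemma memE16_iff {x y : ℕ} :
    (x, y) ∈ (⋃ n : ℕ, (Set.Ico (n ^ 2) ((n + 1) ^ 2)) ×ˢ (Set.Ico (n ^ 2) ((n + 1) ^ 2)))
    ↔ ∃ n, (n ^ 2 ≤ x ∧ x < (n + 1) ^ 2) ∧ (n ^ 2 ≤ y ∧ y < (n + 1) ^ 2) := by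
  simp [Set.mem_iUnion, Set.mem_Ico]

private lemma key16 {x y n : ℕ} (h1 : n ^ 2 ≤ x) (h2 : y < (n + 1) ^ 2) :
    y < (x + 1) ^ 2 := by
  have hn : n ≤ x := le_trans (Nat.le_self_pow two_ne_zero n) h1
  exact lt_of_lt_of_le h2 (Nat.pow_le_pow_left (by omega) 2)

theorem stmt16 :
    (⋃ n : ℕ, (Set.Ico (n ^ 2) ((n + 1) ^ 2)) ×ˢ (Set.Ico (n ^ 2) ((n + 1) ^ 2)))
        ∈ upB {b : Set ℕ | b.Finite} ∧
    (⋃ n : ℕ, (Set.Ico (n ^ 2) ((n + 1) ^ 2)) ×ˢ (Set.Ico (n ^ 2) ((n + 1) ^ 2)))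
        ∉ finPermCoarse := by
  set E := (⋃ n : ℕ, (Set.Ico (n ^ 2) ((n + 1) ^ 2)) ×ˢ (Set.Ico (n ^ 2) ((n + 1) ^ 2)))
    with hE
  have hdiag : diagS ℕ ⊆ E := by
    rintro ⟨x, y⟩ (h : x = y)
    subst h
    have h1 : Nat.sqrt x ^ 2 ≤ x := by
      have := Nat.sqrt_le' x; nlinarith [this]
    have h2 : x < (Nat.sqrt x + 1) ^ 2 := by
      have := Nat.lt_succ_sqrt' x; nlinarith [this]
    exact memE16_iff.2 ⟨Nat.sqrt x, ⟨h1, h2⟩, ⟨h1, h2⟩⟩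
  have hinv : invS E = E := by
    ext ⟨x, y⟩
    constructor
    · intro h
      obtain ⟨n, h1, h2⟩ := memE16_iff.1 h
      exact memE16_iff.2 ⟨n, h2, h1⟩
    · intro h
      obtain ⟨n, h1, h2⟩ := memE16_iff.1 h
      exact memE16_iff.2 ⟨n, h2, h1⟩
  have hball : ∀ b : Set ℕ, b.Finite → (ballS E b).Finite := by
    intro b hb
    apply Set.Finite.subset (hb.biUnion (fun x _ => Set.finite_Iio ((x + 1) ^ 2)))
    rintro y ⟨x, hx, hxy⟩
    obtain ⟨n, ⟨hn1, _⟩, ⟨_, hn2⟩⟩ := memE16_iff.1 hxy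
    exact Set.mem_biUnion hx (key16 hn1 hn2)
  constructor
  · exact ⟨hdiag, fun b hb => ⟨hball b hb, by rw [hinv]; exact hball b hb⟩⟩
  · rintro ⟨-, F, hF, hsub⟩
    -- bound supports
    have hS : (⋃ g ∈ F, {x | g x ≠ x}).Finite := Set.Finite.biUnion F.finite_toSet hF
    obtain ⟨N, hN⟩ := hS.bddAbove
    have hmN : N < (N + 1) ^ 2 := by nlinarith
    have hmem : ((N + 1) ^ 2, (N + 1) ^ 2 + 1) ∈ E := by
      refine memE16_iff.2 ⟨N + 1, ⟨le_refl _, by nlinarith⟩, ⟨by omega, by nlinarith⟩⟩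
    have := hsub hmem
    rcases this with h | ⟨g, hg, hgm⟩
    · simp at h
    · have hfix : g ((N + 1) ^ 2) = (N + 1) ^ 2 := by
        by_contra hne
        have : (N + 1) ^ 2 ∈ ⋃ g ∈ F, {x | g x ≠ x} := Set.mem_biUnion hg hne
        exact absurd (hN this) (by omega)
      rw [hfix] at hgm
      omega
end

section
/- An unbounded subset L of a maximal coarse space (X,𝓔) is large, i.e., X = E[L] for some E ∈ 𝓔. -/
open Set

section Stmt19Aux

variable {X : Type*}

lemma compS_mono {E E' F F' : Set (X × X)} (h1 : E ⊆ E') (h2 : F ⊆ F') :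
    compS E F ⊆ compS E' F' := fun _ ⟨z, hz1, hz2⟩ => ⟨z, h1 hz1, h2 hz2⟩

end Stmt19Aux

theorem stmt19 {X : Type*} (E : Set (Set (X × X)))
    (hmax : IsMaximalCoarse E) (L : Set X) (hL : ¬ IsBoundedIn E L) :
    IsLarge E L := by
  obtain ⟨hE, hub, hmaxx⟩ := hmax
  by_cases hX : Nonempty X
  case neg =>
    have hx : ∀ x : X, False := fun x => hX ⟨x⟩
    have hall : ∀ s : Set (X × X), s = ∅ := fun s => by
      ext p; exact ⟨fun _ => hx p.1, fun h => h.elim⟩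
    rcases Set.eq_empty_or_nonempty E with hEe | ⟨e, he⟩
    · exfalso
      have hcoarse : IsCoarse ({∅} : Set (Set (X × X))) := by
        constructor
        · intro e he; rw [hall (diagS X), hall e]
        · intro e _ f _
          rw [hall (compS e f)]; rfl
        · intro e _; rw [hall (invS e)]; rfl
        · intro e _ f _ hf; rw [hall f]; rfl
        · rw [Set.sUnion_singleton, hall Set.univ]
      have hss : E ⊂ ({∅} : Set (Set (X × X))) := by
        rw [hEe]; exact Set.empty_ssubset.mpr ⟨∅, rfl⟩
      obtain ⟨e, _, x, _⟩ := hmaxx _ hcoarse hss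
      exact hx x
    · exact ⟨e, he, by ext y; exact (hx y).elim⟩
  case pos =>
    obtain ⟨xpt⟩ := hX
    -- E is nonempty, contains the diagonal
    obtain ⟨e0, he0, -⟩ : ∃ e ∈ E, (xpt, xpt) ∈ e := by
      have : (xpt, xpt) ∈ ⋃₀ E := hE.cover ▸ Set.mem_univ _
      obtain ⟨e, he, hm⟩ := this; exact ⟨e, he, hm⟩
    have hdiag : diagS X ∈ E :=
      hE.subset_mem e0 he0 (diagS X) subset_rfl (hE.diag_sub e0 he0)
    -- L is nonempty
    obtain ⟨x₀, hx₀⟩ : L.Nonempty := by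
      rcases Set.eq_empty_or_nonempty L with h | h
      · exact absurd ⟨diagS X, hdiag, xpt, h ▸ Set.empty_subset _⟩ hL
      · exact h
    set S : Set (X × X) := (L ×ˢ L) ∪ diagS X with hSdef
    have hSd : diagS X ⊆ S := Set.subset_union_right
    have hSnotE : S ∉ E := by
      intro h
      exact hL ⟨S, h, x₀, fun y hy => ⟨x₀, rfl, Or.inl ⟨hx₀, hy⟩⟩⟩
    -- the extended coarse structure
    set E' : Set (Set (X × X)) :=
      {e | diagS X ⊆ e ∧ ∃ e₁ ∈ E, ∃ e₂ ∈ E, e ⊆ compS e₁ (compS S e₂)} with hE'def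
    have hEsub : E ⊆ E' := by
      intro e he
      refine ⟨hE.diag_sub e he, e, he, diagS X, hdiag, ?_⟩
      intro p hp
      exact ⟨p.2, hp, p.2, Or.inr rfl, rfl⟩
    have hkey : ∀ g ∈ E, compS S (compS g S) ⊆ compS g (compS S g) := by
      intro g hg p hp
      obtain ⟨z, hz, w, hw, hwb⟩ := hp
      have hΔg : ∀ a : X, (a, a) ∈ g := fun a => hE.diag_sub g hg rfl
      rcases hz with hz | hz
      · rcases hwb with hwb | hwb
        · exact ⟨p.1, hΔg _, p.2, Or.inl ⟨hz.1, hwb.2⟩, hΔg _⟩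
        · exact ⟨p.1, hΔg _, z, Or.inl hz, hwb ▸ hw⟩
      · rcases hwb with hwb | hwb
        · exact ⟨w, hz ▸ hw, p.2, Or.inl hwb, hΔg _⟩
        · exact ⟨w, hz ▸ hw, w, Or.inr rfl, hwb ▸ hΔg w⟩
    have hE'coarse : IsCoarse E' := by
      constructor
      · intro e he; exact he.1
      · rintro e ⟨hed, e₁, he₁, e₂, he₂, hes⟩ f ⟨hfd, f₁, hf₁, f₂, hf₂, hfs⟩
        refine ⟨?_, compS e₁ (compS e₂ f₁), hE.comp_mem _ he₁ _ (hE.comp_mem _ he₂ _ hf₁),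
          compS (compS e₂ f₁) f₂, hE.comp_mem _ (hE.comp_mem _ he₂ _ hf₁) _ hf₂, ?_⟩
        · intro p hp
          exact ⟨p.2, hed (show (p.1, p.2) ∈ diagS X from hp), hfd rfl⟩
        · intro p hp
          obtain ⟨u, hu1, hu2⟩ := hp
          obtain ⟨a, ha, b, hb, hbu⟩ := hes hu1
          obtain ⟨c, hc, d, hd, hdp⟩ := hfs hu2
          have hbc : (b, c) ∈ compS e₂ f₁ := ⟨u, hbu, hc⟩
          have : ((a, d) : X × X) ∈ compS S (compS (compS e₂ f₁) S) :=
            ⟨b, hb, c, hbc, hd⟩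
          obtain ⟨m, hm, n, hn, hnd⟩ := hkey _ (hE.comp_mem _ he₂ _ hf₁) this
          exact ⟨m, ⟨a, ha, hm⟩, n, hn, ⟨d, hnd, hdp⟩⟩
      · rintro e ⟨hed, e₁, he₁, e₂, he₂, hes⟩
        refine ⟨?_, invS e₂, hE.inv_mem _ he₂, invS e₁, hE.inv_mem _ he₁, ?_⟩
        · intro p hp
          exact hed (show ((p.2, p.1) : X × X) ∈ diagS X from (show p.1 = p.2 from hp).symm)
        · intro p hp
          obtain ⟨z, hz, w, hw, hwp⟩ := hes hp
          have hSsym : ((w, z) : X × X) ∈ S := by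
            rcases hw with hw | hw
            · exact Or.inl ⟨hw.2, hw.1⟩
            · exact Or.inr (show w = z from (show z = w from hw).symm)
          exact ⟨w, hwp, z, hSsym, hz⟩
      · rintro e ⟨hed, e₁, he₁, e₂, he₂, hes⟩ f hfd hfe
        exact ⟨hfd, e₁, he₁, e₂, he₂, hfe.trans hes⟩
      · apply Set.Subset.antisymm (Set.subset_univ _)
        calc Set.univ = ⋃₀ E := hE.cover.symm
        _ ⊆ ⋃₀ E' := Set.sUnion_mono hEsub
    have hSE' : S ∈ E' := by
      refine ⟨hSd, diagS X, hdiag, diagS X, hdiag, ?_⟩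
      intro p hp
      exact ⟨p.1, rfl, p.2, hp, rfl⟩
    have hss : E ⊂ E' := ⟨hEsub, fun h => hSnotE (h hSE')⟩
    obtain ⟨e', he', x, hx⟩ := hmaxx E' hE'coarse hss
    obtain ⟨-, e₁, he₁, e₂, he₂, hes⟩ := he'
    obtain ⟨h, hh, hxx⟩ : ∃ h ∈ E, (x₀, x) ∈ h := by
      have : ((x₀, x) : X × X) ∈ ⋃₀ E := hE.cover ▸ Set.mem_univ _
      obtain ⟨h, hh, hm⟩ := this; exact ⟨h, hh, hm⟩
    set k : Set (X × X) := compS h (compS e₁ e₂) with hkdef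
    have hkE : k ∈ E := hE.comp_mem _ hh _ (hE.comp_mem _ he₁ _ he₂)
    refine ⟨compS e₂ k, hE.comp_mem _ he₂ _ hkE, ?_⟩
    apply Set.Subset.antisymm (Set.subset_univ _)
    intro y _
    have hy : y ∈ ballS e' {x} := hx (Set.mem_univ y)
    obtain ⟨x', hx', hxy⟩ := hy
    have hx'x : x' = x := hx'
    obtain ⟨a, ha, b, hb, hby⟩ := hes hxy
    rcases hb with hb | hb
    · -- b ∈ L, (b, y) ∈ e₂
      have hyyk : ((y, y) : X × X) ∈ k :=
        ⟨y, hE.diag_sub h hh rfl, y, hE.diag_sub e₁ he₁ rfl, hE.diag_sub e₂ he₂ rfl⟩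
      exact ⟨b, hb.2, y, hby, hyyk⟩
    · -- a = b, so (x, y) ∈ e₁ ∘ e₂
      have hab : a = b := hb
      have hby' : (a, y) ∈ e₂ := by rw [hab]; exact hby
      have hk : ((x₀, y) : X × X) ∈ k := ⟨x, hxx, a, hx'x ▸ ha, hby'⟩
      exact ⟨x₀, hx₀, x₀, hE.diag_sub e₂ he₂ rfl, hk⟩
end
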